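/- arXiv:1303.4705 — 8 statements merged into one kernel-verified Lean document; each statement's English description precedes it below -/
import Mathlib

section
/- Let f : [0,∞) → ℝ be a nonnegative integrable function and define f_I(y) = ∫_y^∞ f(z) dz. Then for any positive reals α > β > 0, the double integral ∫_0^∞ ∫_0^∞ f(αy + βz) f(βy + αz) dy dz equals (f_I(0))²/(α² − β²) − (2β/(α² − β²)) ∫_0^∞ f_I(αu) f(βu) du. -/
open MeasureTheory Set
open scoped ENNReal


lemma map_affine (a b : ℝ) (ha : a ≠ 0) :
    Measure.map (fun x => a*x+b) volume = ENNReal.ofReal |a⁻¹| • volume := by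
  have h : (fun x : ℝ => a*x+b) = (fun x => x + b) ∘ (fun x => a*x) := rfl
  rw [h, ← Measure.map_map (measurable_add_const b) (measurable_const_mul a)]
  have h2 : Measure.map (fun x : ℝ => a*x) volume = ENNReal.ofReal |a⁻¹| • volume :=
    Real.map_volume_mul_left ha
  rw [h2, Measure.map_smul, (measurePreserving_add_right volume b).map_eq]

lemma affine_preimage_null (a b : ℝ) (ha : a ≠ 0) {N : Set ℝ} (hN : volume N = 0) :
    volume ((fun x => a*x+b) ⁻¹' N) = 0 := by
  refine measure_mono_null (preimage_mono (subset_toMeasurable volume N)) ?_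
  have hm : Measurable (fun x : ℝ => a*x+b) := by fun_prop
  have := Measure.map_apply (μ := volume) hm (measurableSet_toMeasurable volume N)
  rw [← this, map_affine a b ha]
  simp [measure_toMeasurable, hN]

lemma setLIntegral_affine {F : ℝ → ℝ≥0∞} (hF : Measurable F) {a : ℝ} (b : ℝ) (ha : 0 < a)
    {s : Set ℝ} (hs : MeasurableSet s) :
    ∫⁻ x in (fun x => a*x+b) ⁻¹' s, F (a*x+b) = ENNReal.ofReal a⁻¹ * ∫⁻ y in s, F y := by
  have hm : Measurable (fun x : ℝ => a*x+b) := by fun_prop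
  rw [← setLIntegral_map hs hF hm, map_affine a b ha.ne', Measure.restrict_smul,
    lintegral_smul_measure, abs_of_pos (inv_pos.mpr ha), smul_eq_mul]

lemma setLIntegral_affine_Ioi {F : ℝ → ℝ≥0∞} (hF : Measurable F) {a : ℝ} (b : ℝ) (ha : 0 < a)
    (c : ℝ) :
    ∫⁻ x in Ioi c, F (a*x+b) = ENNReal.ofReal a⁻¹ * ∫⁻ y in Ioi (a*c+b), F y := by
  have hp : (fun x : ℝ => a*x+b) ⁻¹' (Ioi (a*c+b)) = Ioi c := by
    ext x
    simp only [mem_preimage, mem_Ioi]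
    constructor
    · intro h; nlinarith
    · intro h; nlinarith
  rw [← hp, setLIntegral_affine hF b ha measurableSet_Ioi]

lemma setLIntegral_affine_Ioo {F : ℝ → ℝ≥0∞} (hF : Measurable F) {a : ℝ} (b : ℝ) (ha : 0 < a)
    (c d : ℝ) :
    ∫⁻ x in Ioo c d, F (a*x+b) = ENNReal.ofReal a⁻¹ * ∫⁻ y in Ioo (a*c+b) (a*d+b), F y := by
  have hp : (fun x : ℝ => a*x+b) ⁻¹' (Ioo (a*c+b) (a*d+b)) = Ioo c d := by
    ext x
    simp only [mem_preimage, mem_Ioo]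
    constructor
    · rintro ⟨h1, h2⟩; constructor <;> nlinarith
    · rintro ⟨h1, h2⟩; constructor <;> nlinarith
  rw [← hp, setLIntegral_affine hF b ha measurableSet_Ioo]

lemma key_identity (g : ℝ → ℝ≥0∞) (hg : Measurable g) (hfin : ∀ x, g x ≠ ∞)
    {α β : ℝ} (hβ : 0 < β) (hαβ : β < α) :
    ENNReal.ofReal (α^2-β^2) *
        (∫⁻ y in Ioi (0:ℝ), ∫⁻ z in Ioi (0:ℝ), g (α*y+β*z) * g (β*y+α*z))
      + 2 * ENNReal.ofReal β *
        (∫⁻ u in Ioi (0:ℝ), (∫⁻ z in Ioi (α*u), g z) * g (β*u))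
      = (∫⁻ z in Ioi (0:ℝ), g z)^2 := by
  have hα : 0 < α := hβ.trans hαβ
  have hd : 0 < α^2 - β^2 := by nlinarith
  set d : ℝ := α^2 - β^2 with hd_def
  have hγ : 0 < d/α := div_pos hd hα
  set GI : ℝ → ℝ≥0∞ := fun t => ∫⁻ z in Ioi t, g z with hGI_def
  have hGIm : Measurable GI :=
    Antitone.measurable (fun s t hst =>
      lintegral_mono_set (Ioi_subset_Ioi hst))
  -- J
  set J : ℝ → ℝ≥0∞ := fun w => ∫⁻ t in Ioo (β*w/α) (α*w/β), g t with hJ_def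
  -- Step B : J w + GI (α*w/β) = GI (β*w/α) for w > 0
  have stepB : ∀ w : ℝ, 0 < w → J w + GI (α*w/β) = GI (β*w/α) := by
    intro w hw
    have h1 : β*w/α < α*w/β := by
      rw [div_lt_div_iff₀ hα hβ]; nlinarith
    have hIci : (∫⁻ t in Ici (α*w/β), g t) = GI (α*w/β) :=
      setLIntegral_congr (Ioi_ae_eq_Ici (μ := volume) (a := α*w/β)).symm
    have hdisj : Disjoint (Ioo (β*w/α) (α*w/β)) (Ici (α*w/β)) := by
      apply Set.disjoint_left.mpr
      rintro x ⟨_, h2⟩ h3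
      exact absurd h3 (not_le.mpr h2)
    rw [← hIci, ← lintegral_union measurableSet_Ici hdisj,
      Ioo_union_Ici_eq_Ioi h1]
  have hmeas2 : Measurable (fun w => g w * GI (α*w/β)) :=
    hg.mul (hGIm.comp ((measurable_const_mul α).div_const β))
  -- T1 and T2
  set T1 : ℝ≥0∞ := ∫⁻ w in Ioi (0:ℝ), g w * GI (β*w/α) with hT1_def
  set T2 : ℝ≥0∞ := ∫⁻ w in Ioi (0:ℝ), g w * GI (α*w/β) with hT2_def
  have claimA : ENNReal.ofReal d *
      (∫⁻ y in Ioi (0:ℝ), ∫⁻ z in Ioi (0:ℝ), g (α*y+β*z) * g (β*y+α*z))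
      = ∫⁻ w in Ioi (0:ℝ), g w * J w := by
    set K : ℝ → ℝ → ℝ≥0∞ := fun y w => g ((d/α)*y + (β/α)*w) * g w with hK_def
    have hKm : Measurable (Function.uncurry K) :=
      (hg.comp ((measurable_fst.const_mul (d/α)).add (measurable_snd.const_mul (β/α)))).mul
        (hg.comp measurable_snd)
    have step0 : ∀ y : ℝ, (∫⁻ z in Ioi (0:ℝ), g (α*y+β*z) * g (β*y+α*z))
        = ENNReal.ofReal α⁻¹ * ∫⁻ w in Ioi (β*y), K y w := by
      intro y
      have hFm : Measurable (K y) := hKm.comp measurable_prodMk_left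
      have h := setLIntegral_affine_Ioi hFm (β*y) hα 0
      rw [show α*(0:ℝ)+β*y = β*y by ring] at h
      rw [← h]
      refine lintegral_congr fun z => ?_
      show g (α*y+β*z) * g (β*y+α*z) = g ((d/α)*y + (β/α)*(α*z+β*y)) * g (α*z+β*y)
      rw [show (d/α)*y + (β/α)*(α*z+β*y) = α*y+β*z by
        rw [hd_def]; field_simp; ring, show α*z+β*y = β*y+α*z by ring]
    set Φ : ℝ → ℝ → ℝ≥0∞ := fun y w => if β*y < w then K y w else 0 with hΦ_def
    have hΦm : Measurable (Function.uncurry Φ) := by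
      apply Measurable.ite ?_ hKm measurable_const
      exact measurableSet_lt (measurable_fst.const_mul β) measurable_snd
    have step1 : ∀ y ∈ Ioi (0:ℝ), (∫⁻ w in Ioi (β*y), K y w)
        = ∫⁻ w in Ioi (0:ℝ), Φ y w := by
      intro y hy
      have hi : (fun w => Φ y w) = (Ioi (β*y)).indicator (K y) := by
        funext w; simp [hΦ_def, indicator_apply]
      rw [hi, lintegral_indicator measurableSet_Ioi,
        Measure.restrict_restrict measurableSet_Ioi, Ioi_inter_Ioi,
        sup_eq_left.mpr (mul_nonneg hβ.le (le_of_lt hy))]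
    have step2 : ∀ w ∈ Ioi (0:ℝ), (∫⁻ y in Ioi (0:ℝ), Φ y w)
        = ENNReal.ofReal (d/α)⁻¹ * (g w * J w) := by
      intro w hw
      have hw' : (0:ℝ) < w := hw
      have hi : (fun y => Φ y w) = (Iio (w/β)).indicator (fun y => K y w) := by
        funext y
        simp only [hΦ_def, indicator_apply, mem_Iio]
        congr 1
        rw [eq_iff_iff, lt_div_iff₀ hβ]
        constructor <;> intro h <;> linarith
      rw [hi, lintegral_indicator measurableSet_Iio,
        Measure.restrict_restrict measurableSet_Iio, Iio_inter_Ioi]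
      have hpull : (∫⁻ y in Ioo (0:ℝ) (w/β), K y w)
          = (∫⁻ y in Ioo (0:ℝ) (w/β), g ((d/α)*y + (β/α)*w)) * g w := by
        rw [hK_def, lintegral_mul_const' (g w) _ (hfin w)]
      rw [hpull]
      have hsub := setLIntegral_affine_Ioo hg ((β/α)*w) hγ 0 (w/β)
      rw [show (d/α)*(0:ℝ)+(β/α)*w = β*w/α by ring,
        show (d/α)*(w/β)+(β/α)*w = α*w/β by
          rw [hd_def]; field_simp; ring] at hsub
      rw [hsub]
      ring
    calc ENNReal.ofReal d *
        (∫⁻ y in Ioi (0:ℝ), ∫⁻ z in Ioi (0:ℝ), g (α*y+β*z) * g (β*y+α*z))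
        = ENNReal.ofReal d * ∫⁻ y in Ioi (0:ℝ),
            ENNReal.ofReal α⁻¹ * ∫⁻ w in Ioi (β*y), K y w := by
          rw [lintegral_congr fun y => step0 y]
      _ = ENNReal.ofReal d * (ENNReal.ofReal α⁻¹ *
            ∫⁻ y in Ioi (0:ℝ), ∫⁻ w in Ioi (0:ℝ), Φ y w) := by
          rw [lintegral_const_mul' _ _ ENNReal.ofReal_ne_top,
            setLIntegral_congr_fun measurableSet_Ioi step1]
      _ = ENNReal.ofReal d * (ENNReal.ofReal α⁻¹ *
            ∫⁻ w in Ioi (0:ℝ), ∫⁻ y in Ioi (0:ℝ), Φ y w) := by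
          rw [lintegral_lintegral_swap hΦm.aemeasurable]
      _ = ENNReal.ofReal d * (ENNReal.ofReal α⁻¹ * (ENNReal.ofReal (d/α)⁻¹ *
            ∫⁻ w in Ioi (0:ℝ), g w * J w)) := by
          rw [setLIntegral_congr_fun measurableSet_Ioi step2,
            lintegral_const_mul' _ _ ENNReal.ofReal_ne_top]
      _ = (ENNReal.ofReal d * ENNReal.ofReal α⁻¹ * ENNReal.ofReal (d/α)⁻¹) *
            ∫⁻ w in Ioi (0:ℝ), g w * J w := by ring
      _ = ∫⁻ w in Ioi (0:ℝ), g w * J w := by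
          rw [← ENNReal.ofReal_mul hd.le, ← ENNReal.ofReal_mul (by positivity),
            show d * α⁻¹ * (d/α)⁻¹ = 1 by field_simp, ENNReal.ofReal_one, one_mul]
  -- Claim C : T1 + T2 = (GI 0)^2
  have claimC : T1 + T2 = (GI 0)^2 := by
    set Ψ : ℝ → ℝ → ℝ≥0∞ := fun w v => if β*w < α*v then g w * g v else 0 with hΨ_def
    set Ψ' : ℝ → ℝ → ℝ≥0∞ := fun w v => if α*w < β*v then g w * g v else 0 with hΨ'_def
    have hgg : Measurable (fun p : ℝ × ℝ => g p.1 * g p.2) :=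
      (hg.comp measurable_fst).mul (hg.comp measurable_snd)
    have hΨm : Measurable (Function.uncurry Ψ) := by
      apply Measurable.ite ?_ hgg measurable_const
      exact measurableSet_lt (measurable_fst.const_mul β) (measurable_snd.const_mul α)
    have hΨ'm : Measurable (Function.uncurry Ψ') := by
      apply Measurable.ite ?_ hgg measurable_const
      exact measurableSet_lt (measurable_fst.const_mul α) (measurable_snd.const_mul β)
    have hT1Ψ : T1 = ∫⁻ w in Ioi (0:ℝ), ∫⁻ v in Ioi (0:ℝ), Ψ w v := by
      rw [hT1_def]
      refine (setLIntegral_congr_fun measurableSet_Ioi (fun w hw => ?_)).symm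
      have hi : (fun v => Ψ w v) = (Ioi (β*w/α)).indicator (fun v => g w * g v) := by
        funext v
        simp only [hΨ_def, indicator_apply, mem_Ioi]
        congr 1
        rw [eq_iff_iff, div_lt_iff₀ hα]
        constructor <;> intro h <;> linarith
      rw [hi, lintegral_indicator measurableSet_Ioi,
        Measure.restrict_restrict measurableSet_Ioi, Ioi_inter_Ioi,
        sup_eq_left.mpr (div_nonneg (mul_nonneg hβ.le (le_of_lt hw)) hα.le),
        lintegral_const_mul' _ _ (hfin w)]
    have hT2Ψ' : T2 = ∫⁻ w in Ioi (0:ℝ), ∫⁻ v in Ioi (0:ℝ), Ψ' w v := by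
      rw [hT2_def]
      refine (setLIntegral_congr_fun measurableSet_Ioi (fun w hw => ?_)).symm
      have hi : (fun v => Ψ' w v) = (Ioi (α*w/β)).indicator (fun v => g w * g v) := by
        funext v
        simp only [hΨ'_def, indicator_apply, mem_Ioi]
        congr 1
        rw [eq_iff_iff, div_lt_iff₀ hβ]
        constructor <;> intro h <;> linarith
      rw [hi, lintegral_indicator measurableSet_Ioi,
        Measure.restrict_restrict measurableSet_Ioi, Ioi_inter_Ioi,
        sup_eq_left.mpr (div_nonneg (mul_nonneg hα.le (le_of_lt hw)) hβ.le),
        lintegral_const_mul' _ _ (hfin w)]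
    have hswap : T2 = ∫⁻ w in Ioi (0:ℝ), ∫⁻ v in Ioi (0:ℝ), Ψ' v w := by
      rw [hT2Ψ']; exact lintegral_lintegral_swap hΨ'm.aemeasurable
    have houter1 : Measurable (fun w => ∫⁻ v in Ioi (0:ℝ), Ψ w v) :=
      hΨm.lintegral_prod_right
    calc T1 + T2
        = (∫⁻ w in Ioi (0:ℝ), ∫⁻ v in Ioi (0:ℝ), Ψ w v)
          + ∫⁻ w in Ioi (0:ℝ), ∫⁻ v in Ioi (0:ℝ), Ψ' v w := by rw [hT1Ψ, hswap]
      _ = ∫⁻ w in Ioi (0:ℝ), ((∫⁻ v in Ioi (0:ℝ), Ψ w v)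
          + ∫⁻ v in Ioi (0:ℝ), Ψ' v w) := by
          rw [← lintegral_add_left houter1]
      _ = ∫⁻ w in Ioi (0:ℝ), ∫⁻ v in Ioi (0:ℝ), (Ψ w v + Ψ' v w) := by
          refine setLIntegral_congr_fun measurableSet_Ioi (fun w hw => ?_)
          have hm1 : Measurable (fun v => Ψ w v) := hΨm.comp measurable_prodMk_left
          rw [lintegral_add_left hm1]
      _ = ∫⁻ w in Ioi (0:ℝ), ∫⁻ v in Ioi (0:ℝ), g w * g v := by
          refine setLIntegral_congr_fun measurableSet_Ioi (fun w hw => ?_)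
          refine lintegral_congr_ae (ae_restrict_of_ae ?_)
          have hset : {v : ℝ | ¬ v ≠ β*w/α} = {β*w/α} := by ext v; simp
          have hsing : ∀ᵐ (v:ℝ), v ≠ β*w/α := by
            rw [ae_iff, hset]; exact measure_singleton _
          filter_upwards [hsing] with v hv
          rcases lt_trichotomy (β*w) (α*v) with h | h | h
          · rw [hΨ_def, hΨ'_def]
            simp only []
            rw [if_pos h, if_neg (not_lt.mpr (le_of_lt h)), add_zero]
          · exact absurd (by field_simp; linarith : v = β*w/α) hv
          · rw [hΨ_def, hΨ'_def]
            simp only []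
            rw [if_neg (not_lt.mpr (le_of_lt h)), if_pos h, zero_add, mul_comm]
      _ = ∫⁻ w in Ioi (0:ℝ), g w * GI 0 := by
          refine setLIntegral_congr_fun measurableSet_Ioi (fun w hw => ?_)
          rw [lintegral_const_mul' _ _ (hfin w)]
      _ = (GI 0)^2 := by
          rw [lintegral_mul_const'' _ hg.aemeasurable, pow_two]
  -- Claim D : T2 = ofReal β * M
  have claimD : T2 = ENNReal.ofReal β *
      (∫⁻ u in Ioi (0:ℝ), (∫⁻ z in Ioi (α*u), g z) * g (β*u)) := by
    have h := setLIntegral_affine_Ioi hmeas2 (0:ℝ) hβ 0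
    rw [show β*(0:ℝ)+0 = 0 by ring] at h
    have hββ : ENNReal.ofReal β * ENNReal.ofReal β⁻¹ = 1 := by
      rw [← ENNReal.ofReal_mul hβ.le, mul_inv_cancel₀ hβ.ne', ENNReal.ofReal_one]
    calc T2 = (ENNReal.ofReal β * ENNReal.ofReal β⁻¹) * T2 := by rw [hββ, one_mul]
      _ = ENNReal.ofReal β * (ENNReal.ofReal β⁻¹ * ∫⁻ w in Ioi (0:ℝ),
            g w * GI (α*w/β)) := by rw [hT2_def, mul_assoc]
      _ = ENNReal.ofReal β * ∫⁻ x in Ioi (0:ℝ), g (β*x+0) * GI (α*(β*x+0)/β) := by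
          rw [← h]
      _ = ENNReal.ofReal β * (∫⁻ u in Ioi (0:ℝ), (∫⁻ z in Ioi (α*u), g z) * g (β*u)) := by
          congr 1
          refine lintegral_congr fun x => ?_
          rw [show α*(β*x+0)/β = α*x by rw [add_zero]; field_simp, add_zero, mul_comm]
  -- combine
  have hsum : (∫⁻ w in Ioi (0:ℝ), g w * J w) + T2 = T1 := by
    rw [hT2_def, hT1_def, ← lintegral_add_right _ hmeas2]
    refine setLIntegral_congr_fun measurableSet_Ioi (fun w hw => ?_)
    rw [← mul_add, stepB w hw]
  calc ENNReal.ofReal d * (∫⁻ y in Ioi (0:ℝ), ∫⁻ z in Ioi (0:ℝ), g (α*y+β*z) * g (β*y+α*z))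
        + 2 * ENNReal.ofReal β * (∫⁻ u in Ioi (0:ℝ), (∫⁻ z in Ioi (α*u), g z) * g (β*u))
      = (∫⁻ w in Ioi (0:ℝ), g w * J w) + (T2 + T2) := by
        have h2 : 2 * ENNReal.ofReal β *
            (∫⁻ u in Ioi (0:ℝ), (∫⁻ z in Ioi (α*u), g z) * g (β*u)) = T2 + T2 := by
          rw [claimD]; ring
        rw [claimA, h2]
    _ = ((∫⁻ w in Ioi (0:ℝ), g w * J w) + T2) + T2 := by ring
    _ = T1 + T2 := by rw [hsum]
    _ = (GI 0)^2 := claimC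


/-- Lemma (integral equality): for nonnegative integrable `f` on `[0,∞)` with integrated
tail `fI y = ∫_y^∞ f`, and `α > β > 0`,
`∫_0^∞ ∫_0^∞ f(αy+βz) f(βy+αz) dy dz
  = (fI 0)²/(α²−β²) − (2β/(α²−β²)) ∫_0^∞ fI(αu) f(βu) du`. -/
theorem integral_equality
    (f : ℝ → ℝ) (hf_nonneg : ∀ x, 0 ≤ x → 0 ≤ f x)
    (hf_int : IntegrableOn f (Ioi 0))
    (fI : ℝ → ℝ) (hfI : ∀ y, fI y = ∫ z in Ioi y, f z)
    (α β : ℝ) (hβ : 0 < β) (hαβ : β < α) :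
    ∫ y in Ioi (0:ℝ), ∫ z in Ioi (0:ℝ), f (α * y + β * z) * f (β * y + α * z)
      = (fI 0)^2 / (α^2 - β^2)
        - (2 * β / (α^2 - β^2)) * ∫ u in Ioi (0:ℝ), fI (α * u) * f (β * u) := by
  have hα : 0 < α := hβ.trans hαβ
  have hd : 0 < α^2 - β^2 := by nlinarith
  have hm := hf_int.aestronglyMeasurable
  set f' : ℝ → ℝ := fun x => if x ∈ Ioi (0:ℝ) then max (hm.mk f x) 0 else 0 with hf'_def
  have hf'meas : Measurable f' :=
    Measurable.ite measurableSet_Ioi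
      (hm.stronglyMeasurable_mk.measurable.max measurable_const) measurable_const
  have hf'nonneg : ∀ x, 0 ≤ f' x := by
    intro x
    by_cases h : (0:ℝ) < x <;> simp [hf'_def, mem_Ioi, h]
  have hae : ∀ᵐ x ∂(volume.restrict (Ioi (0:ℝ))), f x = f' x := by
    filter_upwards [hm.ae_eq_mk, ae_restrict_mem measurableSet_Ioi] with x h1 h2
    rw [hf'_def]
    simp only [h2, if_pos]
    rw [← h1, max_eq_left (hf_nonneg x (le_of_lt h2))]
  have hf'int : IntegrableOn f' (Ioi 0) := hf_int.congr hae
  set g : ℝ → ℝ≥0∞ := fun x => ENNReal.ofReal (f' x) with hg_def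
  have hgmeas : Measurable g := hf'meas.ennreal_ofReal
  have hgfin : ∀ x, g x ≠ ∞ := fun x => ENNReal.ofReal_ne_top
  set GI : ℝ → ℝ≥0∞ := fun t => ∫⁻ z in Ioi t, g z with hGI_def
  have hGIm : Measurable GI :=
    Antitone.measurable (fun s t hst => lintegral_mono_set (Ioi_subset_Ioi hst))
  have hfI_eq : ∀ t : ℝ, 0 ≤ t → ENNReal.ofReal (fI t) = GI t := by
    intro t ht
    have hsub : Ioi t ⊆ Ioi 0 := Ioi_subset_Ioi ht
    have haet : ∀ᵐ x ∂(volume.restrict (Ioi t)), f x = f' x :=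
      ae_restrict_of_ae_restrict_of_subset hsub hae
    rw [hfI t, integral_congr_ae haet]
    exact ofReal_integral_eq_lintegral_ofReal (hf'int.mono_set hsub) (ae_of_all _ hf'nonneg)
  have hfI_nonneg : ∀ t : ℝ, 0 ≤ t → 0 ≤ fI t := by
    intro t ht
    have haet : ∀ᵐ x ∂(volume.restrict (Ioi t)), f x = f' x :=
      ae_restrict_of_ae_restrict_of_subset (Ioi_subset_Ioi ht) hae
    rw [hfI t, integral_congr_ae haet]
    exact integral_nonneg hf'nonneg
  have hfI_toReal : ∀ t : ℝ, 0 ≤ t → fI t = (GI t).toReal := by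
    intro t ht
    rw [← hfI_eq t ht, ENNReal.toReal_ofReal (hfI_nonneg t ht)]
  have hGIfin : ∀ t : ℝ, 0 ≤ t → GI t ≠ ∞ := by
    intro t ht
    rw [← hfI_eq t ht]
    exact ENNReal.ofReal_ne_top
  have hKEY := key_identity g hgmeas hgfin hβ hαβ
  set L := ∫⁻ y in Ioi (0:ℝ), ∫⁻ z in Ioi (0:ℝ), g (α*y+β*z) * g (β*y+α*z) with hL_def
  set M := ∫⁻ u in Ioi (0:ℝ), (∫⁻ z in Ioi (α*u), g z) * g (β*u) with hM_def
  have hGI0fin : GI 0 ≠ ∞ := hGIfin 0 le_rfl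
  have hsq : (GI 0)^2 ≠ ∞ := ENNReal.pow_ne_top hGI0fin
  have h1fin : ENNReal.ofReal (α^2-β^2) * L ≠ ∞ := by
    refine ne_top_of_le_ne_top hsq ?_
    rw [← hKEY]
    exact le_self_add
  have h2fin : 2 * ENNReal.ofReal β * M ≠ ∞ := by
    refine ne_top_of_le_ne_top hsq ?_
    rw [← hKEY]
    exact le_add_self
  have hLfin : L ≠ ∞ := by
    intro hL
    apply h1fin
    rw [hL, ENNReal.mul_top ((ENNReal.ofReal_pos.mpr hd).ne')]
  have hMfin : M ≠ ∞ := by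
    intro hM
    apply h2fin
    rw [hM, ENNReal.mul_top (mul_ne_zero two_ne_zero (ENNReal.ofReal_pos.mpr hβ).ne')]
  have hreal : (α^2-β^2) * L.toReal + 2*β*M.toReal = ((GI 0).toReal)^2 := by
    have h' := congrArg ENNReal.toReal hKEY
    rw [ENNReal.toReal_add h1fin h2fin, ENNReal.toReal_mul, ENNReal.toReal_mul,
      ENNReal.toReal_mul, ENNReal.toReal_ofReal hd.le, ENNReal.toReal_ofReal hβ.le,
      ENNReal.toReal_pow] at h'
    simpa using h'
  -- null set transfer
  have hNf : volume ({x | f x ≠ f' x} ∩ Ioi 0) = 0 := by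
    have h0 : (volume.restrict (Ioi (0:ℝ))) {x | ¬ f x = f' x} = 0 := ae_iff.mp hae
    rw [Measure.restrict_apply' measurableSet_Ioi] at h0
    exact h0
  have hpre' : ∀ a b : ℝ, a ≠ 0 →
      ∀ᵐ z : ℝ ∂volume, (0 < a*z+b → f (a*z+b) = f' (a*z+b)) := by
    intro a b ha
    rw [ae_iff]
    refine measure_mono_null ?_ (affine_preimage_null a b ha hNf)
    intro z hz
    simp only [mem_setOf_eq, Classical.not_imp] at hz
    exact ⟨hz.2, hz.1⟩
  have hinner : ∀ y ∈ Ioi (0:ℝ), (∫ z in Ioi (0:ℝ), f (α*y+β*z) * f (β*y+α*z))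
      = ∫ z in Ioi (0:ℝ), f' (α*y+β*z) * f' (β*y+α*z) := by
    intro y hy
    apply integral_congr_ae
    refine (ae_restrict_iff' measurableSet_Ioi).mpr ?_
    filter_upwards [hpre' β (α*y) hβ.ne', hpre' α (β*y) hα.ne'] with z hz1 hz2 hz0
    have hy0 : (0:ℝ) < y := hy
    have hz0' : (0:ℝ) < z := hz0
    have e1 : f (α*y+β*z) = f' (α*y+β*z) := by
      rw [show α*y+β*z = β*z+α*y by ring]
      exact hz1 (add_pos (mul_pos hβ hz0') (mul_pos hα hy0))
    have e2 : f (β*y+α*z) = f' (β*y+α*z) := by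
      rw [show β*y+α*z = α*z+β*y by ring]
      exact hz2 (add_pos (mul_pos hα hz0') (mul_pos hβ hy0))
    rw [e1, e2]
  have hinner2 : ∀ y : ℝ, (∫ z in Ioi (0:ℝ), f' (α*y+β*z) * f' (β*y+α*z))
      = (∫⁻ z in Ioi (0:ℝ), g (α*y+β*z) * g (β*y+α*z)).toReal := by
    intro y
    have hzm : Measurable fun z => f' (α*y+β*z) * f' (β*y+α*z) :=
      (hf'meas.comp ((measurable_const_mul β).const_add (α*y))).mul
        (hf'meas.comp ((measurable_const_mul α).const_add (β*y)))
    rw [integral_eq_lintegral_of_nonneg_ae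
      (ae_of_all _ fun z => mul_nonneg (hf'nonneg _) (hf'nonneg _))
      hzm.aestronglyMeasurable]
    congr 1
    refine lintegral_congr fun z => ?_
    rw [ENNReal.ofReal_mul (hf'nonneg _)]
  have hLinmeas : Measurable fun y => ∫⁻ z in Ioi (0:ℝ), g (α*y+β*z) * g (β*y+α*z) := by
    apply Measurable.lintegral_prod_right
    exact (hgmeas.comp ((measurable_fst.const_mul α).add (measurable_snd.const_mul β))).mul
      (hgmeas.comp ((measurable_fst.const_mul β).add (measurable_snd.const_mul α)))
  have hout : (∫ y in Ioi (0:ℝ), ∫ z in Ioi (0:ℝ), f (α*y+β*z) * f (β*y+α*z)) = L.toReal := by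
    rw [setIntegral_congr_fun measurableSet_Ioi hinner,
      integral_congr_ae (ae_of_all _ hinner2),
      integral_eq_lintegral_of_nonneg_ae (ae_of_all _ fun y => ENNReal.toReal_nonneg)
        hLinmeas.ennreal_toReal.aestronglyMeasurable]
    congr 1
    have hfe : ∀ᵐ y ∂(volume.restrict (Ioi (0:ℝ))),
        (∫⁻ z in Ioi (0:ℝ), g (α*y+β*z) * g (β*y+α*z)) < ∞ := ae_lt_top hLinmeas hLfin
    refine lintegral_congr_ae ?_
    filter_upwards [hfe] with y hy
    rw [ENNReal.ofReal_toReal hy.ne]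
  have hrhs : (∫ u in Ioi (0:ℝ), fI (α*u) * f (β*u)) = M.toReal := by
    have hcong : ∀ᵐ u ∂(volume.restrict (Ioi (0:ℝ))),
        fI (α*u) * f (β*u) = (GI (α*u)).toReal * f' (β*u) := by
      refine (ae_restrict_iff' measurableSet_Ioi).mpr ?_
      filter_upwards [hpre' β 0 hβ.ne'] with u hu hu0
      have hu0' : (0:ℝ) < u := hu0
      have e1 : f (β*u+0) = f' (β*u+0) := hu (by rw [add_zero]; exact mul_pos hβ hu0')
      rw [add_zero] at e1
      have e2 : fI (α*u) = (GI (α*u)).toReal := hfI_toReal _ (mul_nonneg hα.le hu0'.le)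
      rw [e2, e1]
    rw [integral_congr_ae hcong]
    have hmeasu : Measurable fun u => (GI (α*u)).toReal * f' (β*u) :=
      ((hGIm.comp (measurable_const_mul α)).ennreal_toReal).mul
        (hf'meas.comp (measurable_const_mul β))
    rw [integral_eq_lintegral_of_nonneg_ae
      (ae_of_all _ fun u => mul_nonneg ENNReal.toReal_nonneg (hf'nonneg _))
      hmeasu.aestronglyMeasurable]
    congr 1
    refine setLIntegral_congr_fun measurableSet_Ioi (fun u hu => ?_)
    have hu' : (0:ℝ) < u := hu
    rw [ENNReal.ofReal_mul ENNReal.toReal_nonneg,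
      ENNReal.ofReal_toReal (hGIfin _ (mul_nonneg hα.le hu'.le))]
  rw [hout, hrhs, hfI_toReal 0 le_rfl]
  have hd' : (α^2-β^2) ≠ 0 := hd.ne'
  field_simp
  nlinarith [hreal]
end

section
/- Consider the Kiefer–Wolfowitz recursion W_{n+1} = R((W_n + e₁σ_n − i τ_{n+1})⁺) started from W₁ = 0 with interarrival times τ_n, and the modified recursion W'_{n+1} = R((W'_n + e₁σ_n − i a')⁺) with constant interarrival time a', started from W'₁ = 0, using the same service times σ_n. Define M₀ = 0 and M_n = (M_{n−1} + (a' − τ_n))⁺. Then for all n ≥ 1, W_n ≤ W'_n + i M_n componentwise. -/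
/-- Monotonicity of order statistics with a constant shift: if `f ≤ g + c` pointwise,
then the sorted versions satisfy the same bound componentwise. -/
lemma sorted_le_of_le_add {s : ℕ} (f g : Fin s → ℝ) (c : ℝ)
    (h : ∀ i, f i ≤ g i + c) (k : Fin s) :
    (f ∘ Tuple.sort f) k ≤ (g ∘ Tuple.sort g) k + c := by
  by_contra hc
  push_neg at hc
  have hA : ∀ j : Fin s, j ≤ k → f (Tuple.sort g j) ≤ (g ∘ Tuple.sort g) k + c := fun j hj =>
    (h _).trans (add_le_add_left (Tuple.monotone_sort g hj) c)
  have hsub : Finset.image (Tuple.sort g) (Finset.Iic k) ⊆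
      Finset.image (Tuple.sort f) (Finset.Iio k) := by
    intro i hi
    obtain ⟨j, hj, rfl⟩ := Finset.mem_image.1 hi
    refine Finset.mem_image.2 ⟨(Tuple.sort f).symm (Tuple.sort g j), ?_, by simp⟩
    rw [Finset.mem_Iio]
    by_contra hlt
    push_neg at hlt
    have hmono := Tuple.monotone_sort f hlt
    simp only [Function.comp] at hmono
    rw [Equiv.apply_symm_apply] at hmono
    exact absurd (hmono.trans (hA j (Finset.mem_Iic.1 hj))) (not_le.2 hc)
  have hcard := Finset.card_le_card hsub
  rw [Finset.card_image_of_injective _ (Tuple.sort g).injective,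
      Finset.card_image_of_injective _ (Tuple.sort f).injective,
      Fin.card_Iic, Fin.card_Iio] at hcard
  omega

/-- Kiefer–Wolfowitz recursion comparison (upper bound): if `W` follows the recursion with
interarrival times `τ`, `W'` the recursion with constant interarrival time `a'`
(same service times `σ`), both started at `0`, and `M` is the Lindley recursion for
`ξ_n = a' − τ_n`, then `W_n ≤ W'_n + i M_n` componentwise for all `n ≥ 1`. -/
theorem kiefer_wolfowitz_upper_coupling
    (s : ℕ) (σ τ : ℕ → ℝ) (hσ : ∀ n, 0 ≤ σ n) (hτ : ∀ n, 0 ≤ τ n)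
    (a' : ℝ) (ha' : 0 < a')
    (W W' : ℕ → Fin s → ℝ) (M : ℕ → ℝ)
    (hW1 : W 1 = 0) (hW'1 : W' 1 = 0) (hM0 : M 0 = 0)
    (hW : ∀ n ≥ 1, W (n + 1) =
      (fun i => max 0 (W n i + (if (i : ℕ) = 0 then σ n else 0) - τ (n + 1)))
        ∘ Tuple.sort (fun i => max 0 (W n i + (if (i : ℕ) = 0 then σ n else 0) - τ (n + 1))))
    (hW' : ∀ n ≥ 1, W' (n + 1) =
      (fun i => max 0 (W' n i + (if (i : ℕ) = 0 then σ n else 0) - a'))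
        ∘ Tuple.sort (fun i => max 0 (W' n i + (if (i : ℕ) = 0 then σ n else 0) - a')))
    (hM : ∀ n ≥ 1, M n = max 0 (M (n - 1) + (a' - τ n))) :
    ∀ n ≥ 1, ∀ i, W n i ≤ W' n i + M n := by
  intro n hn
  induction n, hn using Nat.le_induction with
  | base =>
    intro i
    have hM1 : M 1 = max 0 (M 0 + (a' - τ 1)) := hM 1 le_rfl
    have : 0 ≤ M 1 := by rw [hM1]; exact le_max_left _ _
    simp [hW1, hW'1]
    linarith
  | succ n hn ih =>
    intro k
    rw [hW n hn, hW' n hn, hM (n + 1) (by omega)]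
    simp only [Nat.add_sub_cancel]
    apply sorted_le_of_le_add
    intro i
    set x := W' n i + (if (i : ℕ) = 0 then σ n else 0) - a' with hx
    set y := M n + (a' - τ (n + 1)) with hy
    have h1 : W n i + (if (i : ℕ) = 0 then σ n else 0) - τ (n + 1) ≤ x + y := by
      have := ih i; rw [hx, hy]; ring_nf; linarith
    have h2 : max 0 (W n i + (if (i : ℕ) = 0 then σ n else 0) - τ (n + 1)) ≤
        max 0 x + max 0 y := by
      apply max_le
      · exact add_nonneg (le_max_left _ _) (le_max_left _ _)
      · exact h1.trans (add_le_add (le_max_right _ _) (le_max_right _ _))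
    exact h2
end

section
/- With the same setup as the Kiefer–Wolfowitz recursion, if instead M_n is built from ξ_n = τ_n − a' via M₀ = 0, M_n = (M_{n−1} + ξ_n)⁺, then W_n ≥ W'_n − i M_n componentwise for all n ≥ 1. -/
/-- Monotonicity of order statistics: if `g ≤ f` pointwise, then the sorted
versions compare pointwise. -/
lemma sorted_mono {s : ℕ} (f g : Fin s → ℝ) (h : ∀ j, g j ≤ f j) (i : Fin s) :
    (g ∘ Tuple.sort g) i ≤ (f ∘ Tuple.sort f) i := by
  by_contra hcon
  push_neg at hcon
  set F := f ∘ Tuple.sort f with hF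
  set G := g ∘ Tuple.sort g with hG
  have hFmono : Monotone F := Tuple.monotone_sort f
  have hGmono : Monotone G := Tuple.monotone_sort g
  -- A : indices j with f j ≤ F i, has card ≥ i+1
  set A : Finset (Fin s) := Finset.univ.filter (fun j => f j ≤ F i) with hA
  set B : Finset (Fin s) := Finset.univ.filter (fun j => g j < G i) with hB
  have hsubA : (Finset.Iic i).image (Tuple.sort f) ⊆ A := by
    intro j hj
    simp only [Finset.mem_image, Finset.mem_Iic] at hj
    obtain ⟨k, hk, rfl⟩ := hj
    simp only [hA, Finset.mem_filter, Finset.mem_univ, true_and]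
    exact hFmono hk
  have hcardA : (i : ℕ) + 1 ≤ A.card := by
    have := Finset.card_le_card hsubA
    rwa [Finset.card_image_of_injective _ (Tuple.sort f).injective,
      Fin.card_Iic] at this
  have hAB : A ⊆ B := by
    intro j hj
    simp only [hA, Finset.mem_filter, Finset.mem_univ, true_and] at hj
    simp only [hB, Finset.mem_filter, Finset.mem_univ, true_and]
    exact lt_of_le_of_lt (le_trans (h j) hj) hcon
  have hsubB : B ⊆ (Finset.Iio i).image (Tuple.sort g) := by
    intro j hj
    simp only [hB, Finset.mem_filter, Finset.mem_univ, true_and] at hj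
    simp only [Finset.mem_image, Finset.mem_Iio]
    refine ⟨(Tuple.sort g)⁻¹ j, ?_, by simp⟩
    by_contra hk
    push_neg at hk
    have := hGmono hk
    simp only [hG, Function.comp_apply, Equiv.apply_symm_apply] at this hj ⊢
    rw [Equiv.Perm.coe_inv, Equiv.apply_symm_apply] at this
    exact absurd hj (not_lt.mpr this)
  have hcardB : B.card ≤ (i : ℕ) := by
    have := Finset.card_le_card hsubB
    rwa [Finset.card_image_of_injective _ (Tuple.sort g).injective,
      Fin.card_Iio] at this
  have := Finset.card_le_card hAB
  omega

/-- Kiefer–Wolfowitz recursion comparison (lower bound): with `M` the Lindley recursion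
for `ξ_n = τ_n − a'`, one has `W_n ≥ W'_n − i M_n` componentwise for all `n ≥ 1`. -/
theorem kiefer_wolfowitz_lower_coupling
    (s : ℕ) (σ τ : ℕ → ℝ) (hσ : ∀ n, 0 ≤ σ n) (hτ : ∀ n, 0 ≤ τ n)
    (a' : ℝ) (ha' : 0 < a')
    (W W' : ℕ → Fin s → ℝ) (M : ℕ → ℝ)
    (hW1 : W 1 = 0) (hW'1 : W' 1 = 0) (hM0 : M 0 = 0)
    (hW : ∀ n ≥ 1, W (n + 1) =
      (fun i => max 0 (W n i + (if (i : ℕ) = 0 then σ n else 0) - τ (n + 1)))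
        ∘ Tuple.sort (fun i => max 0 (W n i + (if (i : ℕ) = 0 then σ n else 0) - τ (n + 1))))
    (hW' : ∀ n ≥ 1, W' (n + 1) =
      (fun i => max 0 (W' n i + (if (i : ℕ) = 0 then σ n else 0) - a'))
        ∘ Tuple.sort (fun i => max 0 (W' n i + (if (i : ℕ) = 0 then σ n else 0) - a')))
    (hM : ∀ n ≥ 1, M n = max 0 (M (n - 1) + (τ n - a'))) :
    ∀ n ≥ 1, ∀ i, W' n i - M n ≤ W n i := by
  intro n hn
  induction n, hn using Nat.le_induction with
  | base =>
    intro i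
    have hM1 : 0 ≤ M 1 := by rw [hM 1 le_rfl]; simp
    simp [hW1, hW'1]
    linarith
  | succ n hn ih =>
    intro i
    have hMn : M (n + 1) = max 0 (M n + (τ (n + 1) - a')) := by
      have := hM (n + 1) (by omega)
      simpa using this
    have hM0' : 0 ≤ M (n + 1) := by rw [hMn]; exact le_max_left _ _
    have hM1' : M n + (τ (n + 1) - a') ≤ M (n + 1) := by
      rw [hMn]; exact le_max_right _ _
    set f : Fin s → ℝ :=
      fun j => max 0 (W n j + (if (j : ℕ) = 0 then σ n else 0) - τ (n + 1)) with hf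
    set g : Fin s → ℝ :=
      fun j => max 0 (W' n j + (if (j : ℕ) = 0 then σ n else 0) - a') with hg
    set c : ℝ := M (n + 1) with hc
    -- pointwise bound: g ≤ f + c
    have hpt : ∀ j, g j ≤ (fun j => f j + c) j := by
      intro j
      simp only [hf, hg, hc]
      apply max_le
      · have : (0:ℝ) ≤ max 0 (W n j + (if (j : ℕ) = 0 then σ n else 0) - τ (n + 1)) :=
          le_max_left _ _
        linarith
      · have h1 := ih j
        have h2 : W n j + (if (j : ℕ) = 0 then σ n else 0) - τ (n + 1) ≤
            max 0 (W n j + (if (j : ℕ) = 0 then σ n else 0) - τ (n + 1)) := le_max_right _ _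
        linarith
    -- sorting f + const c gives sorted f + c
    have hshift : ((fun j => f j + c) ∘ Tuple.sort f) =
        (fun j => f j + c) ∘ Tuple.sort (fun j => f j + c) := by
      apply Tuple.comp_sort_eq_comp_iff_monotone.mpr
      intro a b hab
      have := Tuple.monotone_sort f hab
      simp only [Function.comp_apply] at this ⊢
      linarith
    have key := sorted_mono (fun j => f j + c) g hpt i
    rw [← hshift] at key
    simp only [Function.comp_apply] at key
    have hWeq : W (n + 1) i = f (Tuple.sort f i) := by
      rw [hW n hn]; rfl
    have hW'eq : W' (n + 1) i = g (Tuple.sort g i) := by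
      rw [hW' n hn]; rfl
    rw [hWeq, hW'eq]
    linarith
end

section
/- Let W' and M be independent nonnegative random variables, let G be a long-tailed distribution with P(W' > x) ≤ Ḡ(x) for all x, and suppose P(M > x) ≤ e^{−βx} for some β > 0 and all x ≥ 0. Then limsup_{x→∞} P(W' + M > x)/Ḡ(x) ≤ 1. -/
open MeasureTheory ProbabilityTheory Filter

/-- Iterated one-step comparison for a long-tailed function: from
`G (x-1) ≤ e^δ G x` for large `x`, deduce `G (x-j) ≤ e^{δ j} G x`. -/
lemma chain_aux {G : ℝ → ℝ} (hG_pos : ∀ x, 0 < G x)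
    (hG : Tendsto (fun x => G (x + (-1)) / G x) atTop (nhds 1))
    {δ : ℝ} (hδ : 0 < δ) :
    ∃ X : ℝ, 0 ≤ X ∧ ∀ (j : ℕ) (x : ℝ), X + j ≤ x →
      G (x - j) ≤ Real.exp (δ * j) * G x := by
  have h1 : (1:ℝ) < Real.exp δ := by
    rw [← Real.exp_zero]; exact Real.exp_lt_exp.mpr hδ
  have h2 : ∀ᶠ x in atTop, G (x + (-1)) / G x ≤ Real.exp δ :=
    hG.eventually (eventually_le_nhds h1)
  obtain ⟨X₀, hX₀⟩ := eventually_atTop.mp h2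
  refine ⟨max X₀ 0, le_max_right _ _, ?_⟩
  intro j
  induction j with
  | zero => intro x hx; simp
  | succ j ih =>
    intro x hx
    have hj : ((j:ℝ)+1) = ((j+1 : ℕ) : ℝ) := by push_cast; ring
    have hx1 : max X₀ 0 + ((j:ℝ)+1) ≤ x := by rw [hj]; exact hx
    have hx2 : X₀ ≤ x := by
      have := le_max_left X₀ 0
      have hj0 : (0:ℝ) ≤ (j:ℝ)+1 := by positivity
      linarith
    have hstep : G (x + (-1)) ≤ Real.exp δ * G x := by
      have := hX₀ x (by linarith)
      exact (div_le_iff₀ (hG_pos x)).mp this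
    have hih : G ((x-1) - j) ≤ Real.exp (δ * j) * G (x-1) := by
      apply ih
      have hj0 : (0:ℝ) ≤ (j:ℝ) := by positivity
      linarith
    have heq : x - ((j+1 : ℕ) : ℝ) = (x - 1) - j := by push_cast; ring
    rw [heq]
    calc G ((x-1) - j) ≤ Real.exp (δ * j) * G (x-1) := hih
      _ ≤ Real.exp (δ * j) * (Real.exp δ * G x) := by
          have hx1' : G (x - 1) ≤ Real.exp δ * G x := by
            have : x + (-1) = x - 1 := by ring
            rwa [this] at hstep
          exact mul_le_mul_of_nonneg_left hx1' (Real.exp_nonneg _)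
      _ = Real.exp (δ * ((j+1:ℕ):ℝ)) * G x := by
          rw [← mul_assoc, ← Real.exp_add]
          congr 2
          push_cast; ring

set_option maxHeartbeats 2000000 in
/-- If `W'` and `M` are independent nonnegative random variables, `G` is a long-tailed
tail dominating the tail of `W'`, and the tail of `M` decays exponentially, then
`limsup_{x→∞} P(W' + M > x)/Ḡ(x) ≤ 1`. -/
theorem sum_with_light_tail_upper
    {Ω : Type*} [MeasurableSpace Ω] (μ : Measure Ω) [IsProbabilityMeasure μ]
    (W M : Ω → ℝ) (hW : Measurable W) (hM : Measurable M)
    (hW_nonneg : ∀ ω, 0 ≤ W ω) (hM_nonneg : ∀ ω, 0 ≤ M ω)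
    (hindep : IndepFun W M μ)
    (G : ℝ → ℝ) (hG_pos : ∀ x, 0 < G x)
    (hG_lt : ∀ t : ℝ, Tendsto (fun x => G (x + t) / G x) atTop (nhds 1))
    (hWG : ∀ x, (μ {ω | x < W ω}).toReal ≤ G x)
    (β : ℝ) (hβ : 0 < β)
    (hMtail : ∀ x ≥ 0, (μ {ω | x < M ω}).toReal ≤ Real.exp (-β * x)) :
    limsup (fun x => (μ {ω | x < W ω + M ω}).toReal / G x) atTop ≤ 1 := by
  set T : ℝ → ℝ := fun x => (μ {ω | x < W ω + M ω}).toReal with hTdef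
  show limsup (fun x => T x / G x) atTop ≤ 1
  have hTnonneg : ∀ x, 0 ≤ T x := fun x => ENNReal.toReal_nonneg
  have hTmono : ∀ {a b : ℝ}, a ≤ b → T b ≤ T a := by
    intro a b hab
    apply ENNReal.toReal_mono (measure_ne_top μ _)
    exact measure_mono (fun ω h => lt_of_le_of_lt hab h)
  by_cases hS : ∃ a, ∀ᶠ x in atTop, T x / G x ≤ a
  case neg =>
    rw [Filter.limsup_eq]
    have hempty : {a | ∀ᶠ x in atTop, T x / G x ≤ a} = ∅ := by
      apply Set.eq_empty_iff_forall_notMem.mpr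
      intro a ha; exact hS ⟨a, ha⟩
    rw [hempty, Real.sInf_empty]; norm_num
  case pos =>
  obtain ⟨a₀, ha₀⟩ := hS
  set A := max a₀ 0 with hAdef
  have hA0 : 0 ≤ A := le_max_right _ _
  have hA' : ∀ᶠ x in atTop, T x ≤ A * G x := by
    filter_upwards [ha₀] with x hx
    have hGx := hG_pos x
    calc T x = (T x / G x) * G x := by field_simp
      _ ≤ A * G x :=
        mul_le_mul_of_nonneg_right (le_trans hx (le_max_left _ _)) hGx.le
  obtain ⟨x₀, hx₀⟩ := eventually_atTop.mp hA'
  -- notation for tails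
  set PW : ℝ → ℝ := fun c => (μ {ω | c < W ω}).toReal with hPWdef
  set v : ℝ → ℝ := fun c => (μ {ω | c ≤ M ω}).toReal with hvdef
  set pB : ℕ → ℝ :=
    fun k => (μ ({ω | (k:ℝ) ≤ M ω} \ {ω | (k:ℝ) + 1 ≤ M ω})).toReal with hpBdef
  have hPW_le : ∀ c, PW c ≤ G c := hWG
  have hv_nonneg : ∀ c, 0 ≤ v c := fun c => ENNReal.toReal_nonneg
  have hPW_nonneg : ∀ c, 0 ≤ PW c := fun c => ENNReal.toReal_nonneg
  have hpB_nonneg : ∀ k, 0 ≤ pB k := fun k => ENNReal.toReal_nonneg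
  have hv_le_one : ∀ c, v c ≤ 1 := by
    intro c
    have h1 : μ {ω | c ≤ M ω} ≤ 1 := prob_le_one
    calc v c ≤ (1 : ENNReal).toReal := ENNReal.toReal_mono ENNReal.one_ne_top h1
      _ = 1 := by simp
  have hv_exp : ∀ r : ℝ, 1 ≤ r → v r ≤ Real.exp (-β * (r - 1)) := by
    intro r hr
    have hsub : {ω | r ≤ M ω} ⊆ {ω | r - 1 < M ω} := by
      intro ω h; simp only [Set.mem_setOf_eq] at *; linarith
    calc v r ≤ (μ {ω | r - 1 < M ω}).toReal :=
          ENNReal.toReal_mono (measure_ne_top μ _) (measure_mono hsub)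
      _ ≤ Real.exp (-β * (r - 1)) := hMtail (r-1) (by linarith)
  have hpB_eq : ∀ k : ℕ, pB k = v k - v ((k:ℝ) + 1) := by
    intro k
    have hsub : {ω | (k:ℝ) + 1 ≤ M ω} ⊆ {ω | (k:ℝ) ≤ M ω} := by
      intro ω h; simp only [Set.mem_setOf_eq] at *; linarith
    have hmeas : MeasurableSet {ω | (k:ℝ) + 1 ≤ M ω} := hM measurableSet_Ici
    rw [hpBdef]
    simp only
    rw [measure_diff hsub hmeas.nullMeasurableSet (measure_ne_top μ _),
      ENNReal.toReal_sub_of_le (measure_mono hsub) (measure_ne_top μ _)]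
  have hpB_le_v : ∀ k : ℕ, pB k ≤ v k := by
    intro k
    rw [hpB_eq k]
    have := hv_nonneg ((k:ℝ)+1)
    linarith
  have hsum_pB : ∀ m : ℕ, ∑ k ∈ Finset.range m, pB k ≤ 1 := by
    intro m
    have htel : ∑ k ∈ Finset.range m, pB k
        = v ((0:ℕ):ℝ) - v ((m:ℕ):ℝ) := by
      have : ∀ k ∈ Finset.range m, pB k = (fun i : ℕ => v i) k - (fun i : ℕ => v i) (k+1) := by
        intro k _
        rw [hpB_eq k]
        norm_num
      rw [Finset.sum_congr rfl this, Finset.sum_range_sub' (fun i : ℕ => v i) m]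
    rw [htel]
    have h1 := hv_le_one ((0:ℕ):ℝ)
    have h2 := hv_nonneg ((m:ℕ):ℝ)
    linarith
  -- key decomposition inequality
  have key : ∀ (x : ℝ) (n : ℕ),
      T x ≤ (∑ k ∈ Finset.range n, PW (x - (k:ℝ) - 1) * pB k) + v (n:ℝ) := by
    intro x n
    set Ak : ℕ → Set Ω := fun k => {ω | x - (k:ℝ) - 1 < W ω} with hAk
    set Bk : ℕ → Set Ω :=
      fun k => {ω | (k:ℝ) ≤ M ω} \ {ω | (k:ℝ) + 1 ≤ M ω} with hBk
    have hincl : {ω | x < W ω + M ω} ⊆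
        (⋃ k ∈ Finset.range n, Ak k ∩ Bk k) ∪ {ω | (n:ℝ) ≤ M ω} := by
      intro ω hω
      simp only [Set.mem_setOf_eq] at hω
      by_cases hn : (n:ℝ) ≤ M ω
      · exact Set.mem_union_right _ hn
      · push_neg at hn
        refine Set.mem_union_left _ ?_
        have hkn : ⌊M ω⌋₊ < n := (Nat.floor_lt (hM_nonneg ω)).mpr hn
        have hfl : ((⌊M ω⌋₊ : ℝ)) ≤ M ω := Nat.floor_le (hM_nonneg ω)
        have hfu : M ω < (⌊M ω⌋₊ : ℝ) + 1 := Nat.lt_floor_add_one _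
        refine Set.mem_iUnion₂.mpr ⟨⌊M ω⌋₊, Finset.mem_range.mpr hkn, ?_, ?_, ?_⟩
        · show x - (⌊M ω⌋₊:ℝ) - 1 < W ω
          linarith
        · exact hfl
        · simp only [Set.mem_setOf_eq]
          push_neg
          exact hfu
    have hAB : ∀ k : ℕ, μ (Ak k ∩ Bk k) = μ (Ak k) * μ (Bk k) := by
      intro k
      have hsetB : Bk k = M ⁻¹' (Set.Ico ((k:ℝ)) ((k:ℝ)+1)) := by
        ext ω
        simp only [hBk, Set.mem_diff, Set.mem_setOf_eq, Set.mem_preimage, Set.mem_Ico, not_le]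
      have hsetA : Ak k = W ⁻¹' (Set.Ioi (x - (k:ℝ) - 1)) := rfl
      rw [hsetB, hsetA]
      exact hindep.measure_inter_preimage_eq_mul _ _ measurableSet_Ioi measurableSet_Ico
    have step1 : μ {ω | x < W ω + M ω} ≤
        (∑ k ∈ Finset.range n, μ (Ak k) * μ (Bk k)) + μ {ω | (n:ℝ) ≤ M ω} := by
      refine le_trans (measure_mono hincl) (le_trans (measure_union_le _ _) ?_)
      gcongr
      refine le_trans (measure_biUnion_finset_le _ _) ?_
      exact le_of_eq (Finset.sum_congr rfl fun k _ => hAB k)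
    have hsum_ne : (∑ k ∈ Finset.range n, μ (Ak k) * μ (Bk k)) ≠ ⊤ := by
      refine ENNReal.sum_ne_top.mpr fun k _ => ?_
      exact ENNReal.mul_ne_top (measure_ne_top μ _) (measure_ne_top μ _)
    have hne : (∑ k ∈ Finset.range n, μ (Ak k) * μ (Bk k)) + μ {ω | (n:ℝ) ≤ M ω} ≠ ⊤ :=
      ENNReal.add_ne_top.mpr ⟨hsum_ne, measure_ne_top μ _⟩
    have hto := ENNReal.toReal_mono hne step1
    rw [ENNReal.toReal_add hsum_ne (measure_ne_top μ _),
      ENNReal.toReal_sum (fun k _ => ENNReal.mul_ne_top (measure_ne_top μ _) (measure_ne_top μ _))]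
      at hto
    simp only [ENNReal.toReal_mul] at hto
    exact hto
  clear_value T PW v pB
  -- main eventual bound
  have main : ∀ ε > (0:ℝ), ∀ᶠ x in atTop, T x / G x ≤ 1 + ε := by
    intro ε hε
    set ε' := ε / 3 with hε'def
    have hε' : 0 < ε' := by positivity
    set q := Real.exp (-(β/2)) with hqdef
    have hq0 : 0 < q := Real.exp_pos _
    have hq1 : q < 1 := by
      rw [hqdef, ← Real.exp_zero]
      apply Real.exp_lt_exp.mpr
      linarith
    have hqpow : ∀ m : ℕ, q ^ m = Real.exp (-(β/2) * (m:ℝ)) := by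
      intro m
      rw [hqdef, ← Real.exp_nat_mul]
      congr 1; ring
    -- choose h
    obtain ⟨h, hh⟩ : ∃ m : ℕ, q ^ m < ε' * (1 - q) * Real.exp (-(3*β/2)) :=
      exists_pow_lt_of_lt_one
        (mul_pos (mul_pos hε' (by linarith)) (Real.exp_pos _)) hq1
    have hgeo_target : Real.exp (3*β/2) * (q ^ (h+1) / (1 - q)) ≤ ε' := by
      have hq' : q ^ (h+1) ≤ q ^ h := by
        rw [pow_succ]
        nlinarith [pow_pos hq0 h, pow_nonneg hq0.le h]
      have h2 : q ^ (h+1) ≤ ε' * (1 - q) * Real.exp (-(3*β/2)) :=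
        le_of_lt (lt_of_le_of_lt hq' hh)
      have hE : Real.exp (3*β/2) * Real.exp (-(3*β/2)) = 1 := by
        rw [← Real.exp_add]; norm_num
      have h1q : 0 < 1 - q := by linarith
      calc Real.exp (3*β/2) * (q ^ (h+1) / (1 - q))
          ≤ Real.exp (3*β/2) * ((ε' * (1 - q) * Real.exp (-(3*β/2))) / (1 - q)) := by
            gcongr
        _ = ε' * (Real.exp (3*β/2) * Real.exp (-(3*β/2))) := by
            field_simp
        _ = ε' := by rw [hE]; ring
    -- choose δ
    have hlog : 0 < Real.log (1 + ε') := Real.log_pos (by linarith)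
    set δ := min (β/2) (Real.log (1 + ε') / ((h:ℝ) + 1)) with hδdef
    have hδ0 : 0 < δ := by
      apply lt_min (by linarith)
      positivity
    have hδβ : δ ≤ β/2 := min_le_left _ _
    have hδh : Real.exp (δ * ((h:ℝ)+1)) ≤ 1 + ε' := by
      have hstep : δ * ((h:ℝ)+1) ≤ Real.log (1 + ε') := by
        have h1 : δ ≤ Real.log (1 + ε') / ((h:ℝ)+1) := min_le_right _ _
        have h2 : (0:ℝ) < (h:ℝ) + 1 := by positivity
        calc δ * ((h:ℝ)+1) ≤ (Real.log (1 + ε') / ((h:ℝ)+1)) * ((h:ℝ)+1) :=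
              mul_le_mul_of_nonneg_right h1 h2.le
          _ = Real.log (1 + ε') := by field_simp
      calc Real.exp (δ * ((h:ℝ)+1)) ≤ Real.exp (Real.log (1 + ε')) :=
            Real.exp_le_exp.mpr hstep
        _ = 1 + ε' := Real.exp_log (by linarith)
    clear_value δ q
    -- chain
    have hGm1 : Tendsto (fun x => G (x + (-1)) / G x) atTop (nhds 1) := hG_lt (-1)
    obtain ⟨X₁, hX₁0, hchain⟩ := chain_aux hG_pos hGm1 hδ0
    set X := max X₁ x₀ with hXdef
    have hXX₁ : X₁ ≤ X := le_max_left _ _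
    have hXx₀ : x₀ ≤ X := le_max_right _ _
    have hX0 : 0 ≤ X := le_trans hX₁0 hXX₁
    clear_value X
    -- case split on the remainder behaviour
    by_cases hcase : ∀ᶠ x in atTop,
        Real.exp (β*(X+2)) * Real.exp (-β * x) ≤ ε' * G x
    · -- main estimate
      filter_upwards [hcase, eventually_ge_atTop (X + ((h:ℝ)+2))] with x hx1 hx2
      have hxX : X ≤ x := by
        have : (0:ℝ) ≤ (h:ℝ) + 2 := by positivity
        linarith
      have hx0 : (0:ℝ) ≤ x := le_trans hX0 hxX
      set n := ⌊x - X⌋₊ with hndef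
      have hn1 : (n:ℝ) ≤ x - X := Nat.floor_le (by linarith)
      have hn2 : x - X - 1 < (n:ℝ) := Nat.sub_one_lt_floor _
      have hhn : h + 2 ≤ n := by
        apply Nat.le_floor
        push_cast
        linarith
      have hh1n : h + 1 ≤ n := by omega
      clear_value n
      -- chain bound for each k < n
      have hchain' : ∀ k ∈ Finset.range n,
          PW (x - (k:ℝ) - 1) ≤ Real.exp (δ * ((k:ℝ)+1)) * G x := by
        intro k hk
        have hkn : k < n := Finset.mem_range.mp hk
        have hstep : X₁ + ((k+1:ℕ):ℝ) ≤ x := by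
          push_cast
          have : ((k:ℝ)+1) ≤ (n:ℝ) := by exact_mod_cast Nat.succ_le_of_lt hkn
          linarith
        have := hchain (k+1) x hstep
        have heq : x - ((k+1:ℕ):ℝ) = x - (k:ℝ) - 1 := by push_cast; ring
        rw [heq] at this
        calc PW (x - (k:ℝ) - 1) ≤ G (x - (k:ℝ) - 1) := hPW_le _
          _ ≤ Real.exp (δ * ((k+1:ℕ):ℝ)) * G x := this
          _ = Real.exp (δ * ((k:ℝ)+1)) * G x := by norm_num
      -- split the sum
      have hsplit : ∑ k ∈ Finset.range n, PW (x - (k:ℝ) - 1) * pB k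
          = (∑ k ∈ Finset.Ico 0 (h+1), PW (x - (k:ℝ) - 1) * pB k)
            + ∑ k ∈ Finset.Ico (h+1) n, PW (x - (k:ℝ) - 1) * pB k := by
        rw [Finset.range_eq_Ico,
          ← Finset.sum_Ico_consecutive _ (Nat.zero_le (h+1)) hh1n]
      -- block 1
      have hblock1 : ∑ k ∈ Finset.Ico 0 (h+1), PW (x - (k:ℝ) - 1) * pB k
          ≤ (1 + ε') * G x := by
        have hterm : ∀ k ∈ Finset.Ico 0 (h+1),
            PW (x - (k:ℝ) - 1) * pB k ≤ ((1 + ε') * G x) * pB k := by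
          intro k hk
          have hkh : k < h + 1 := (Finset.mem_Ico.mp hk).2
          have hk_mem : k ∈ Finset.range n := Finset.mem_range.mpr (lt_of_lt_of_le hkh hh1n)
          have h1 : PW (x - (k:ℝ) - 1) ≤ Real.exp (δ * ((k:ℝ)+1)) * G x := hchain' k hk_mem
          have h2 : Real.exp (δ * ((k:ℝ)+1)) ≤ 1 + ε' := by
            refine le_trans ?_ hδh
            apply Real.exp_le_exp.mpr
            have : ((k:ℝ)+1) ≤ ((h:ℝ)+1) := by
              have : (k:ℝ) ≤ (h:ℝ) := by exact_mod_cast Nat.lt_succ_iff.mp hkh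
              linarith
            nlinarith [hδ0.le]
          have h3 : PW (x - (k:ℝ) - 1) ≤ (1 + ε') * G x := by
            calc PW (x - (k:ℝ) - 1) ≤ Real.exp (δ * ((k:ℝ)+1)) * G x := h1
              _ ≤ (1 + ε') * G x :=
                mul_le_mul_of_nonneg_right h2 (hG_pos x).le
          exact mul_le_mul_of_nonneg_right h3 (hpB_nonneg k)
        calc ∑ k ∈ Finset.Ico 0 (h+1), PW (x - (k:ℝ) - 1) * pB k
            ≤ ∑ k ∈ Finset.Ico 0 (h+1), ((1 + ε') * G x) * pB k :=
              Finset.sum_le_sum hterm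
          _ = ((1 + ε') * G x) * ∑ k ∈ Finset.Ico 0 (h+1), pB k := by
              rw [Finset.mul_sum]
          _ ≤ ((1 + ε') * G x) * 1 := by
              apply mul_le_mul_of_nonneg_left
              · rw [← Finset.range_eq_Ico]; exact hsum_pB (h+1)
              · exact mul_nonneg (by linarith) (hG_pos x).le
          _ = (1 + ε') * G x := by ring
      -- block 2
      have hblock2 : ∑ k ∈ Finset.Ico (h+1) n, PW (x - (k:ℝ) - 1) * pB k
          ≤ ε' * G x := by
        have hterm : ∀ k ∈ Finset.Ico (h+1) n,
            PW (x - (k:ℝ) - 1) * pB k ≤ (Real.exp (3*β/2) * G x) * q ^ k := by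
          intro k hk
          obtain ⟨hk1, hk2⟩ := Finset.mem_Ico.mp hk
          have hk_mem : k ∈ Finset.range n := Finset.mem_range.mpr hk2
          have h1 : PW (x - (k:ℝ) - 1) ≤ Real.exp (δ * ((k:ℝ)+1)) * G x := hchain' k hk_mem
          have hk1' : (1:ℝ) ≤ (k:ℝ) := by
            have : 1 ≤ k := by omega
            exact_mod_cast this
          have h2 : pB k ≤ Real.exp (-β * ((k:ℝ) - 1)) := by
            refine le_trans (hpB_le_v k) (hv_exp (k:ℝ) ?_)
            exact hk1'
          have hPWk : 0 ≤ PW (x - (k:ℝ) - 1) := hPW_nonneg _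
          have hprod : PW (x - (k:ℝ) - 1) * pB k
              ≤ (Real.exp (δ * ((k:ℝ)+1)) * G x) * Real.exp (-β * ((k:ℝ) - 1)) := by
            apply mul_le_mul h1 h2 (hpB_nonneg k)
            exact mul_nonneg (Real.exp_nonneg _) (hG_pos x).le
          have hqk : (Real.exp (δ * ((k:ℝ)+1)) * G x) * Real.exp (-β * ((k:ℝ) - 1))
                ≤ (Real.exp (3*β/2) * G x) * q ^ k := by
              have hexp : Real.exp (δ * ((k:ℝ)+1)) * Real.exp (-β * ((k:ℝ) - 1))
                  ≤ Real.exp (3*β/2) * q ^ k := by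
                rw [← Real.exp_add]
                rw [hqpow k, ← Real.exp_add]
                apply Real.exp_le_exp.mpr
                have hδk : δ * ((k:ℝ)+1) ≤ (β/2) * ((k:ℝ)+1) := by
                  apply mul_le_mul_of_nonneg_right hδβ
                  positivity
                linarith
              calc (Real.exp (δ * ((k:ℝ)+1)) * G x) * Real.exp (-β * ((k:ℝ) - 1))
                  = (Real.exp (δ * ((k:ℝ)+1)) * Real.exp (-β * ((k:ℝ) - 1))) * G x := by ring
                _ ≤ (Real.exp (3*β/2) * q ^ k) * G x := by
                    apply mul_le_mul_of_nonneg_right hexp (hG_pos x).le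
                _ = (Real.exp (3*β/2) * G x) * q ^ k := by ring
          exact le_trans hprod hqk
        have hgeo : ∑ k ∈ Finset.Ico (h+1) n, q ^ k ≤ q ^ (h+1) / (1 - q) := by
          rw [Finset.sum_Ico_eq_sum_range]
          have : ∀ j ∈ Finset.range (n - (h+1)), q ^ (h+1+j) = q ^ (h+1) * q ^ j := by
            intro j _; rw [pow_add]
          rw [Finset.sum_congr rfl this, ← Finset.mul_sum]
          have hgs : ∑ j ∈ Finset.range (n - (h+1)), q ^ j ≤ 1 / (1 - q) := by
            rw [geom_sum_eq (ne_of_lt hq1)]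
            have h1q : 0 < 1 - q := by linarith
            have hne1 : q - 1 ≠ 0 := by linarith
            have hne2 : (1:ℝ) - q ≠ 0 := by linarith
            have heq : (q ^ (n - (h+1)) - 1)/(q - 1) = (1 - q ^ (n - (h+1)))/(1 - q) := by
              field_simp
              ring
            rw [heq]
            have hqn : 0 ≤ q ^ (n - (h+1)) := pow_nonneg hq0.le _
            rw [div_le_div_iff₀ h1q h1q]
            nlinarith
          calc q ^ (h+1) * ∑ j ∈ Finset.range (n - (h+1)), q ^ j
              ≤ q ^ (h+1) * (1 / (1 - q)) := by
                apply mul_le_mul_of_nonneg_left hgs (pow_nonneg hq0.le _)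
            _ = q ^ (h+1) / (1 - q) := by ring
        calc ∑ k ∈ Finset.Ico (h+1) n, PW (x - (k:ℝ) - 1) * pB k
            ≤ ∑ k ∈ Finset.Ico (h+1) n, (Real.exp (3*β/2) * G x) * q ^ k :=
              Finset.sum_le_sum hterm
          _ = (Real.exp (3*β/2) * G x) * ∑ k ∈ Finset.Ico (h+1) n, q ^ k := by
              rw [Finset.mul_sum]
          _ ≤ (Real.exp (3*β/2) * G x) * (q ^ (h+1) / (1 - q)) := by
              apply mul_le_mul_of_nonneg_left hgeo
              exact mul_nonneg (Real.exp_nonneg _) (hG_pos x).le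
          _ = (Real.exp (3*β/2) * (q ^ (h+1) / (1 - q))) * G x := by ring
          _ ≤ ε' * G x :=
              mul_le_mul_of_nonneg_right hgeo_target (hG_pos x).le
      -- remainder
      have hrem : v (n:ℝ) ≤ ε' * G x := by
        have h1n : (1:ℝ) ≤ (n:ℝ) := by
          have : (1:ℕ) ≤ n := by omega
          exact_mod_cast this
        have h1 : v (n:ℝ) ≤ Real.exp (-β * ((n:ℝ) - 1)) := hv_exp _ h1n
        have h2 : Real.exp (-β * ((n:ℝ) - 1))
            ≤ Real.exp (β*(X+2)) * Real.exp (-β * x) := by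
          rw [← Real.exp_add]
          apply Real.exp_le_exp.mpr
          nlinarith
        linarith
      -- total
      have htotal : T x ≤ (1 + 3*ε') * G x := by
        have := key x n
        rw [hsplit] at this
        nlinarith
      rw [div_le_iff₀ (hG_pos x)]
      have hee : 1 + 3*ε' = 1 + ε := by rw [hε'def]; ring
      rw [← hee]
      exact htotal
    · -- pathological case: the tail T vanishes eventually
      have hfreq : ∃ᶠ x in atTop,
          ε' * G x < Real.exp (β*(X+2)) * Real.exp (-β * x) := by
        rw [Filter.not_eventually] at hcase
        exact hcase.mono (fun x hx => not_le.mp hx)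
      have hT0 : T (X + 1) = 0 := by
        refine le_antisymm ?_ (hTnonneg _)
        by_contra hpos
        push_neg at hpos
        set η := T (X+1) with hηdef
        -- find a suitable x
        have hev : ∀ᶠ x in atTop,
            (A * (Real.exp (β*(X+2)) / ε')) * Real.exp (-(β/2) * x) < η ∧ X + 1 ≤ x := by
          have htend : Tendsto
              (fun x : ℝ => (A * (Real.exp (β*(X+2)) / ε')) * Real.exp (-(β/2) * x))
              atTop (nhds 0) := by
            have h1 : Tendsto (fun x : ℝ => (β/2) * x) atTop atTop := by
              apply Tendsto.const_mul_atTop (by linarith)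
              exact tendsto_id
            have h2 : Tendsto (fun x : ℝ => Real.exp (-((β/2) * x))) atTop (nhds 0) :=
              Real.tendsto_exp_neg_atTop_nhds_zero.comp h1
            have h3 : Tendsto
                (fun x : ℝ => (A * (Real.exp (β*(X+2)) / ε')) * Real.exp (-((β/2) * x)))
                atTop (nhds ((A * (Real.exp (β*(X+2)) / ε')) * 0)) :=
              h2.const_mul _
            rw [mul_zero] at h3
            refine h3.congr fun x => ?_
            congr 2
            ring
          have h4 : ∀ᶠ x in atTop,
              (A * (Real.exp (β*(X+2)) / ε')) * Real.exp (-(β/2) * x) < η :=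
            htend.eventually (eventually_lt_nhds hpos)
          exact h4.and (eventually_ge_atTop (X+1))
        obtain ⟨x, hxf, hxev1, hxev2⟩ := (hfreq.and_eventually hev).exists
        -- chain down to the window [X, X+1]
        have hxX : X + 1 ≤ x := hxev2
        set j := ⌊x - X⌋₊ with hjdef
        have hj1 : (j:ℝ) ≤ x - X := Nat.floor_le (by linarith)
        have hj2 : x - X - 1 < (j:ℝ) := Nat.sub_one_lt_floor _
        clear_value j
        have hchain' : G (x - (j:ℝ)) ≤ Real.exp (δ * (j:ℝ)) * G x := by
          apply hchain j x
          linarith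
        set z := x - (j:ℝ) with hzdef
        have hz1 : X ≤ z := by rw [hzdef]; linarith
        have hz2 : z ≤ X + 1 := by rw [hzdef]; linarith
        have hx0 : (0:ℝ) ≤ x := by linarith
        have hfinal : T (X+1) ≤ (A * (Real.exp (β*(X+2)) / ε')) * Real.exp (-(β/2) * x) := by
          have hGz : G z ≤ Real.exp (δ * (j:ℝ)) * G x := hchain'
          have hGx : G x ≤ (Real.exp (β*(X+2)) / ε') * Real.exp (-β * x) := by
            rw [div_mul_eq_mul_div, le_div_iff₀ hε']
            linarith [hxf]
          have hexpj : Real.exp (δ * (j:ℝ)) ≤ Real.exp ((β/2) * x) := by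
            apply Real.exp_le_exp.mpr
            have hjx : (j:ℝ) ≤ x := by linarith
            nlinarith [hδ0.le, hδβ]
          calc T (X+1) ≤ T z := hTmono hz2
            _ ≤ A * G z := hx₀ z (le_trans hXx₀ hz1)
            _ ≤ A * (Real.exp (δ * (j:ℝ)) * G x) :=
                mul_le_mul_of_nonneg_left hGz hA0
            _ ≤ A * (Real.exp ((β/2) * x) * ((Real.exp (β*(X+2)) / ε') * Real.exp (-β * x))) := by
                apply mul_le_mul_of_nonneg_left ?_ hA0
                apply mul_le_mul hexpj hGx (hG_pos x).le (Real.exp_nonneg _)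
            _ = (A * (Real.exp (β*(X+2)) / ε')) * (Real.exp ((β/2) * x) * Real.exp (-β * x)) := by
                ring
            _ = (A * (Real.exp (β*(X+2)) / ε')) * Real.exp (-(β/2) * x) := by
                rw [← Real.exp_add]
                congr 2
                ring
        rw [← hηdef] at hfinal
        exact absurd hfinal (not_le.mpr hxev1)
      filter_upwards [eventually_ge_atTop (X+1)] with x hx
      have hTx : T x = 0 := le_antisymm (hT0 ▸ hTmono hx) (hTnonneg x)
      rw [hTx, zero_div]
      linarith
  -- conclude: limsup ≤ 1 + ε for every ε > 0
  have hratio_nonneg : ∀ x, 0 ≤ T x / G x :=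
    fun x => div_nonneg (hTnonneg x) (hG_pos x).le
  have hlimsup_le : ∀ ε > (0:ℝ),
      limsup (fun x => T x / G x) atTop ≤ 1 + ε := by
    intro ε hε
    rw [Filter.limsup_eq]
    apply csInf_le
    · refine ⟨0, fun a ha => ?_⟩
      simp only [Set.mem_setOf_eq] at ha
      obtain ⟨x, hx⟩ := ha.exists
      exact le_trans (hratio_nonneg x) hx
    · exact main ε hε
  by_contra hcon
  push_neg at hcon
  have hε : 0 < (limsup (fun x => T x / G x) atTop - 1) / 2 := by linarith
  have := hlimsup_le _ hε
  linarith
end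

section
/- Let B be a distribution on [0,∞) with finite mean, tail B̄, and integrated tail B̄_I(x) = ∫_x^∞ B̄(y) dy. If B̄_I is long-tailed and c > 0, then ∑_{k=N}^∞ B̄(x + ck) ∼ (1/c) B̄_I(x + cN) as x → ∞, where N = N(x) ≥ 0 may depend on x. -/
open MeasureTheory Set Filter

lemma union_Ioc (a c : ℝ) (hc : 0 < c) :
    (⋃ j : ℕ, Ioc (a + c * j) (a + c * (j + 1))) = Ioi a := by
  ext y
  simp only [mem_iUnion, mem_Ioc, mem_Ioi]
  constructor
  · rintro ⟨j, h1, _⟩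
    have : (0:ℝ) ≤ c * j := by positivity
    linarith
  · intro hy
    set t : ℝ := (y - a) / c with ht
    have htpos : 0 < t := div_pos (by linarith) hc
    refine ⟨⌈t⌉₊ - 1, ?_, ?_⟩
    · have h1 : (⌈t⌉₊ : ℝ) < t + 1 := Nat.ceil_lt_add_one htpos.le
      have h2 : 1 ≤ ⌈t⌉₊ := Nat.one_le_ceil_iff.2 htpos
      have : ((⌈t⌉₊ - 1 : ℕ) : ℝ) = (⌈t⌉₊ : ℝ) - 1 := by
        push_cast [h2]; ring
      rw [this]
      have : (⌈t⌉₊ : ℝ) - 1 < t := by linarith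
      have hy' : y = a + c * t := by rw [ht, mul_div_cancel₀ _ hc.ne']; ring
      rw [hy']
      nlinarith
    · have h1 : t ≤ (⌈t⌉₊ : ℝ) := Nat.le_ceil t
      have h2 : 1 ≤ ⌈t⌉₊ := Nat.one_le_ceil_iff.2 htpos
      have h3 : ((⌈t⌉₊ - 1 : ℕ) : ℝ) + 1 = (⌈t⌉₊ : ℝ) := by push_cast [h2]; ring
      rw [h3]
      have hy' : y = a + c * t := by rw [ht, mul_div_cancel₀ _ hc.ne']; ring
      rw [hy']
      nlinarith

lemma pieces_hasSum (B : ℝ → ℝ) (hB_int : IntegrableOn B (Ioi 0))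
    (c : ℝ) (hc : 0 < c) (a : ℝ) (ha : 0 ≤ a) :
    HasSum (fun j : ℕ => ∫ y in Ioc (a + c * j) (a + c * (j + 1)), B y)
      (∫ y in Ioi a, B y) := by
  have hun := union_Ioc a c hc
  have hint : IntegrableOn B (⋃ j : ℕ, Ioc (a + c * j) (a + c * (j + 1))) := by
    rw [hun]; exact hB_int.mono_set (Ioi_subset_Ioi ha)
  have hd : Pairwise (Function.onFun Disjoint fun j : ℕ => Ioc (a + c * j) (a + c * (j + 1))) := by
    intro i j hij
    rcases hij.lt_or_gt with h | h
    · refine Set.Ioc_disjoint_Ioc.2 ?_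
      have hij' : (i : ℝ) + 1 ≤ j := by exact_mod_cast h
      have : a + c * (i + 1) ≤ a + c * j := by nlinarith
      calc min (a + c * (i + 1)) (a + c * (j + 1)) ≤ a + c * (i + 1) := min_le_left _ _
        _ ≤ a + c * j := this
        _ ≤ max (a + c * i) (a + c * j) := le_max_right _ _
    · refine (Set.Ioc_disjoint_Ioc.2 ?_)
      have hij' : (j : ℝ) + 1 ≤ i := by exact_mod_cast h
      have : a + c * (j + 1) ≤ a + c * i := by nlinarith
      calc min (a + c * (i + 1)) (a + c * (j + 1)) ≤ a + c * (j + 1) := min_le_right _ _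
        _ ≤ a + c * i := this
        _ ≤ max (a + c * i) (a + c * j) := le_max_left _ _
  have := hasSum_integral_iUnion (μ := volume) (f := B)
    (fun j : ℕ => measurableSet_Ioc) hd hint
  rwa [hun] at this

lemma piece_le (B : ℝ → ℝ) (hB_anti : Antitone B) (u v : ℝ) (huv : u ≤ v) :
    ∫ y in Ioc u v, B y ≤ (v - u) * B u := by
  have h : ∫ y in Ioc u v, B y ≤ ∫ _y in Ioc u v, B u := by
    apply setIntegral_mono_on
    · exact (AntitoneOn.integrableOn_isCompact isCompact_Icc (hB_anti.antitoneOn _)).mono_set Ioc_subset_Icc_self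
    · exact integrableOn_const measure_Ioc_lt_top.ne
    · exact measurableSet_Ioc
    · exact fun y hy => hB_anti hy.1.le
  calc ∫ y in Ioc u v, B y ≤ ∫ _y in Ioc u v, B u := h
    _ = (v - u) * B u := by
        rw [setIntegral_const, Real.volume_real_Ioc, smul_eq_mul,
          max_eq_left (by linarith)]

lemma le_piece (B : ℝ → ℝ) (hB_anti : Antitone B) (u v : ℝ) (huv : u ≤ v) :
    (v - u) * B v ≤ ∫ y in Ioc u v, B y := by
  have h : ∫ _y in Ioc u v, B v ≤ ∫ y in Ioc u v, B y := by
    apply setIntegral_mono_on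
    · exact integrableOn_const measure_Ioc_lt_top.ne
    · exact (AntitoneOn.integrableOn_isCompact isCompact_Icc (hB_anti.antitoneOn _)).mono_set Ioc_subset_Icc_self
    · exact measurableSet_Ioc
    · exact fun y hy => hB_anti hy.2
  calc (v - u) * B v = ∫ _y in Ioc u v, B v := by
        rw [setIntegral_const, Real.volume_real_Ioc, smul_eq_mul,
          max_eq_left (by linarith)]
    _ ≤ ∫ y in Ioc u v, B y := h

lemma sum_bounds (B : ℝ → ℝ) (hB_nonneg : ∀ x, 0 ≤ B x) (hB_anti : Antitone B)
    (hB_int : IntegrableOn B (Ioi 0)) (c : ℝ) (hc : 0 < c) (a : ℝ) (ha : c ≤ a) :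
    (∫ y in Ioi a, B y) ≤ c * ∑' j : ℕ, B (a + c * j) ∧
      c * ∑' j : ℕ, B (a + c * j) ≤ ∫ y in Ioi (a - c), B y := by
  have ha0 : (0:ℝ) ≤ a := le_trans hc.le ha
  have ha0' : (0:ℝ) ≤ a - c := by linarith
  have hS := pieces_hasSum B hB_int c hc a ha0
  have hS' := pieces_hasSum B hB_int c hc (a - c) ha0'
  -- upper bound on each shifted piece: c * B (a + c*j) ≤ ∫ on Ioc (a-c+c*j) (a-c+c*(j+1))
  have hub : ∀ j : ℕ, c * B (a + c * j) ≤ ∫ y in Ioc (a - c + c * j) (a - c + c * (j + 1)), B y := by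
    intro j
    have := le_piece B hB_anti (a - c + c * j) (a - c + c * (j + 1)) (by nlinarith)
    have he : a - c + c * (j + 1) = a + c * j := by ring
    rw [he] at this
    calc c * B (a + c * j) = (a - c + c * (j+1) - (a - c + c * j)) * B (a + c * j) := by
          ring_nf
      _ ≤ _ := by rw [he]; exact this
  have hlb : ∀ j : ℕ, (∫ y in Ioc (a + c * j) (a + c * (j + 1)), B y) ≤ c * B (a + c * j) := by
    intro j
    have := piece_le B hB_anti (a + c * j) (a + c * (j + 1)) (by nlinarith)
    have he : a + c * (j + 1) - (a + c * j) = c := by ring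
    rwa [he] at this
  have hsummable : Summable (fun j : ℕ => c * B (a + c * j)) := by
    apply Summable.of_nonneg_of_le (fun j => mul_nonneg hc.le (hB_nonneg _)) hub hS'.summable
  have hsum : HasSum (fun j : ℕ => c * B (a + c * j)) (c * ∑' j : ℕ, B (a + c * j)) := by
    have : Summable (fun j : ℕ => B (a + c * j)) := by
      have := hsummable.mul_left c⁻¹
      simpa [inv_mul_cancel_left₀ hc.ne'] using this
    simpa [tsum_mul_left] using hsummable.hasSum
  constructor
  · exact hasSum_le hlb hS hsum
  · exact hasSum_le hub hsum hS'

/-- If the integrated tail `B̄_I(x) = ∫_x^∞ B̄` is long-tailed and `c > 0`, then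
`∑_{k=N}^∞ B̄(x+ck) ∼ (1/c) B̄_I(x+cN)` as `x → ∞`, uniformly in the choice of
`N = N(x) ≥ 0`. -/
theorem tail_sum_asymptotics
    (B : ℝ → ℝ) (hB_nonneg : ∀ x, 0 ≤ B x) (hB_anti : Antitone B)
    (hB_int : IntegrableOn B (Ioi 0))
    (BI : ℝ → ℝ) (hBI : ∀ x, BI x = ∫ y in Ioi x, B y)
    (hBI_pos : ∀ x, 0 < BI x)
    (hBI_lt : ∀ t : ℝ, Tendsto (fun x => BI (x + t) / BI x) atTop (nhds 1))
    (c : ℝ) (hc : 0 < c) (N : ℝ → ℕ) :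
    Tendsto (fun x => (∑' j : ℕ, B (x + c * ((N x : ℝ) + j))) / ((1 / c) * BI (x + c * N x)))
      atTop (nhds 1) := by
  set a : ℝ → ℝ := fun x => x + c * N x with ha
  have hax : ∀ x, x ≤ a x := fun x => by
    have h0 : (0:ℝ) ≤ c * N x := by positivity
    show x ≤ x + c * N x
    linarith
  -- upper comparison function
  have hu : Tendsto (fun x => a x - c) atTop atTop :=
    tendsto_atTop_mono (fun x => by have := hax x; show x + -c ≤ a x - c; linarith)
      (tendsto_atTop_add_const_right _ (-c) tendsto_id)
  have h2 : Tendsto (fun x => BI (a x - c + c) / BI (a x - c)) atTop (nhds 1) :=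
    (hBI_lt c).comp hu
  have h3 : Tendsto (fun x => BI (a x - c) / BI (a x)) atTop (nhds 1) := by
    have := (h2.inv₀ one_ne_zero)
    simp only [inv_one] at this
    convert this using 2 with x
    rw [sub_add_cancel, inv_div]
  -- eventual bounds
  have hbound : ∀ᶠ x in atTop, 1 ≤ (∑' j : ℕ, B (x + c * ((N x : ℝ) + j))) / ((1 / c) * BI (a x)) ∧
      (∑' j : ℕ, B (x + c * ((N x : ℝ) + j))) / ((1 / c) * BI (a x)) ≤ BI (a x - c) / BI (a x) := by
    filter_upwards [eventually_ge_atTop c] with x hx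
    have hac : c ≤ a x := le_trans hx (hax x)
    obtain ⟨hlow, hhigh⟩ := sum_bounds B hB_nonneg hB_anti hB_int c hc (a x) hac
    have hrw : (fun j : ℕ => B (x + c * ((N x : ℝ) + j))) = fun j : ℕ => B (a x + c * j) := by
      funext j; simp only [ha]; ring_nf
    rw [hrw]
    have hBIa : BI (a x) = ∫ y in Ioi (a x), B y := hBI _
    have hBIac : BI (a x - c) = ∫ y in Ioi (a x - c), B y := hBI _
    have hpos : 0 < (1 / c) * BI (a x) := by
      have := hBI_pos (a x); positivity
    constructor
    · rw [le_div_iff₀ hpos, one_mul]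
      rw [hBIa]
      calc (1 / c) * ∫ y in Ioi (a x), B y ≤ (1 / c) * (c * ∑' j : ℕ, B (a x + c * j)) := by
            apply mul_le_mul_of_nonneg_left hlow (by positivity)
        _ = ∑' j : ℕ, B (a x + c * j) := by field_simp
    · rw [div_le_div_iff₀ hpos (hBI_pos (a x))]
      have hkey : (∑' j : ℕ, B (a x + c * j)) ≤ (1 / c) * BI (a x - c) := by
        rw [hBIac]
        calc (∑' j : ℕ, B (a x + c * j)) = (1/c) * (c * ∑' j : ℕ, B (a x + c * j)) := by
              field_simp
          _ ≤ (1/c) * ∫ y in Ioi (a x - c), B y := by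
              apply mul_le_mul_of_nonneg_left hhigh (by positivity)
      have h1 : 0 < BI (a x) := hBI_pos _
      have h2' : 0 < BI (a x - c) := hBI_pos _
      nlinarith [mul_le_mul_of_nonneg_right hkey h1.le]
  refine tendsto_of_tendsto_of_tendsto_of_le_of_le' tendsto_const_nhds h3
    (hbound.mono fun x hx => hx.1) (hbound.mono fun x hx => hx.2)
end

section
/- Let B be a distribution on [0,∞) with long-tailed integrated tail B_I, and let 0 < b < a. Then the function x ↦ (B̄_I(x))² + b ∫_0^∞ B̄_I(x + ya) B̄(x + y(a−b)) dy is long-tailed, i.e., its value at x + t is asymptotically equivalent to its value at x as x → ∞ for every fixed t. -/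
open MeasureTheory Set Filter

-- translation of set integral over Ioi
lemma shift_setIntegral_Ioi (f : ℝ → ℝ) (c x : ℝ) :
    ∫ y in Ioi x, f (y + c) = ∫ y in Ioi (x + c), f y := by
  have h := (measurePreserving_add_right (volume : Measure ℝ) c).setIntegral_preimage_emb
    (measurableEmbedding_addRight c) f (Ioi (x + c))
  have hpre : (fun y : ℝ => y + c) ⁻¹' Ioi (x + c) = Ioi x := by
    ext y; simp [mem_Ioi]
  rw [hpre] at h
  exact h

lemma shift_integrableOn_Ioi {f : ℝ → ℝ} {c x : ℝ} (hf : IntegrableOn f (Ioi (x + c))) :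
    IntegrableOn (fun y => f (y + c)) (Ioi x) := by
  have h := (measurePreserving_add_right (volume : Measure ℝ) c).integrableOn_comp_preimage
    (measurableEmbedding_addRight c) (f := f) (s := Ioi (x + c))
  have hpre : (fun y : ℝ => y + c) ⁻¹' Ioi (x + c) = Ioi x := by
    ext y; simp [mem_Ioi]
  rw [hpre] at h
  exact h.mpr hf

/-- If the integrated tail `B̄_I` is long-tailed and `0 < b < a`, then
`x ↦ (B̄_I(x))² + b ∫_0^∞ B̄_I(x+ya) B̄(x+y(a−b)) dy` is long-tailed. -/
theorem combined_function_long_tailed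
    (B : ℝ → ℝ) (hB_nonneg : ∀ x, 0 ≤ B x) (hB_anti : Antitone B)
    (hB_int : IntegrableOn B (Ioi 0))
    (BI : ℝ → ℝ) (hBI : ∀ x, BI x = ∫ y in Ioi x, B y)
    (hBI_pos : ∀ x, 0 < BI x)
    (hBI_lt : ∀ t : ℝ, Tendsto (fun x => BI (x + t) / BI x) atTop (nhds 1))
    (a b : ℝ) (hb : 0 < b) (hba : b < a)
    (F : ℝ → ℝ)
    (hF : ∀ x, F x = (BI x)^2 + b * ∫ y in Ioi (0:ℝ), BI (x + y * a) * B (x + y * (a - b))) :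
    ∀ t : ℝ, Tendsto (fun x => F (x + t) / F x) atTop (nhds 1) := by
  have ha : 0 < a := hb.trans hba
  have hc : 0 < a - b := by linarith
  have hBmeas : Measurable B := hB_anti.measurable
  -- B is integrable on every Ioi x
  have hBx : ∀ x : ℝ, IntegrableOn B (Ioi x) := by
    intro x
    rcases le_or_gt 0 x with h | h
    · exact hB_int.mono_set (Ioi_subset_Ioi h)
    · rw [← Ioc_union_Ioi_eq_Ioi h.le, integrableOn_union]
      refine ⟨?_, hB_int⟩
      refine Measure.integrableOn_of_bounded (M := B x) measure_Ioc_lt_top.ne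
        hBmeas.aestronglyMeasurable ?_
      filter_upwards [ae_restrict_mem measurableSet_Ioc] with y hy
      rw [Real.norm_eq_abs, abs_of_nonneg (hB_nonneg y)]
      exact hB_anti hy.1.le
  -- splitting BI
  have hBI_split : ∀ x t : ℝ, 0 ≤ t → BI x = (∫ y in Ioc x (x + t), B y) + BI (x + t) := by
    intro x t ht
    rw [hBI x, hBI (x + t), ← setIntegral_union (Ioc_disjoint_Ioi le_rfl) measurableSet_Ioi
      ((hBx x).mono_set Ioc_subset_Ioi_self) (hBx (x + t)),
      Ioc_union_Ioi_eq_Ioi (by linarith)]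
  have hIoc_nonneg : ∀ x y : ℝ, 0 ≤ ∫ z in Ioc x y, B z :=
    fun x y => setIntegral_nonneg measurableSet_Ioc fun z _ => hB_nonneg z
  have hBI_anti : Antitone BI := by
    intro x y hxy
    have h := hBI_split x (y - x) (by linarith)
    rw [show x + (y - x) = y by ring] at h
    have := hIoc_nonneg x y
    linarith
  -- B x / BI x → 0
  have hq : Tendsto (fun x => B x / BI x) atTop (nhds 0) := by
    have h1 : Tendsto (fun x => BI x / BI (x + 1) - 1) atTop (nhds 0) := by
      have h0 : Tendsto (fun x => BI (x + 1 + -1) / BI (x + 1)) atTop (nhds 1) :=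
        (hBI_lt (-1)).comp (tendsto_atTop_add_const_right atTop 1 tendsto_id)
      have h0' : Tendsto (fun x => BI x / BI (x + 1)) atTop (nhds 1) := by
        simpa using h0
      simpa using h0'.sub (tendsto_const_nhds (x := (1:ℝ)))
    have hb1 : ∀ x : ℝ, B (x + 1) / BI (x + 1) ≤ BI x / BI (x + 1) - 1 := by
      intro x
      have hsplit := hBI_split x 1 zero_le_one
      have hBle : B (x + 1) ≤ ∫ y in Ioc x (x + 1), B y := by
        have hint : IntegrableOn B (Ioc x (x + 1)) := (hBx x).mono_set Ioc_subset_Ioi_self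
        have hconst : ∫ _ in Ioc x (x + 1), B (x + 1) ≤ ∫ y in Ioc x (x + 1), B y := by
          refine setIntegral_mono_on (integrableOn_const measure_Ioc_lt_top.ne)
            hint measurableSet_Ioc ?_
          intro y hy
          exact hB_anti hy.2
        have : ∫ _ in Ioc x (x + 1), B (x + 1) = B (x + 1) := by
          rw [setIntegral_const, Real.volume_real_Ioc_of_le (by linarith)]
          simp
        linarith
      have hpos := hBI_pos (x + 1)
      rw [div_le_iff₀ hpos, sub_mul, div_mul_cancel₀ _ hpos.ne', one_mul]
      linarith
    have h2 : Tendsto (fun x => B (x + 1) / BI (x + 1)) atTop (nhds 0) := by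
      refine tendsto_of_tendsto_of_tendsto_of_le_of_le (g := fun _ => (0:ℝ))
        tendsto_const_nhds h1 (fun x => div_nonneg (hB_nonneg _) (hBI_pos _).le) hb1
    have h3 := h2.comp (tendsto_atTop_add_const_right atTop (-1) tendsto_id)
    have heq : ((fun x => B (x + 1) / BI (x + 1)) ∘ fun x : ℝ => id x + -1)
        = fun x => B x / BI x := by
      funext x; simp
    rwa [heq] at h3
  -- integrand
  set g : ℝ → ℝ → ℝ := fun x y => BI (x + y * a) * B (x + y * (a - b)) with hg_def
  have hg_meas : ∀ x, Measurable (g x) := by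
    intro x
    have h1 : Antitone fun y : ℝ => BI (x + y * a) := fun y z h =>
      hBI_anti (by nlinarith)
    have h2 : Antitone fun y : ℝ => B (x + y * (a - b)) := fun y z h =>
      hB_anti (by nlinarith)
    exact h1.measurable.mul h2.measurable
  have hBcomp_int : ∀ x : ℝ, IntegrableOn (fun y => B (x + y * (a - b))) (Ioi 0) := by
    intro x
    have h1 : IntegrableOn (fun z : ℝ => B (z + x)) (Ioi 0) := by
      apply shift_integrableOn_Ioi
      rw [zero_add]; exact hBx x
    have h2 := (integrableOn_Ioi_comp_mul_right_iff (fun z : ℝ => B (z + x)) 0 hc).mpr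
      (by rw [zero_mul]; exact h1)
    simpa [add_comm] using h2
  have hg_int : ∀ x, IntegrableOn (g x) (Ioi 0) := by
    intro x
    refine Integrable.mono' ((hBcomp_int x).const_mul (BI x))
      (hg_meas x).aestronglyMeasurable ?_
    filter_upwards [ae_restrict_mem measurableSet_Ioi] with y hy
    rw [Real.norm_eq_abs, abs_of_nonneg (mul_nonneg (hBI_pos _).le (hB_nonneg _))]
    exact mul_le_mul_of_nonneg_right (hBI_anti (by nlinarith [mem_Ioi.mp hy])) (hB_nonneg _)
  have hI_nonneg : ∀ x, 0 ≤ ∫ y in Ioi (0:ℝ), g x y :=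
    fun x => setIntegral_nonneg measurableSet_Ioi fun y _ =>
      mul_nonneg (hBI_pos _).le (hB_nonneg _)
  have hF_pos : ∀ x, 0 < F x := by
    intro x
    rw [hF x]
    exact add_pos_of_pos_of_nonneg (pow_pos (hBI_pos x) 2) (mul_nonneg hb.le (hI_nonneg x))
  -- main case s ≥ 0
  have key : ∀ s : ℝ, 0 ≤ s → Tendsto (fun x => F (x + s) / F x) atTop (nhds 1) := by
    intro s hs
    set δ : ℝ := s / (a - b) with hδ_def
    have hδ_nonneg : 0 ≤ δ := div_nonneg hs hc.le
    have hδab : δ * (a - b) = s := div_mul_cancel₀ s hc.ne'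
    -- upper bound: F (x+s) ≤ F x
    have hg_anti_x : ∀ x y : ℝ, 0 < y → g (x + s) y ≤ g x y := by
      intro x y hy
      exact mul_le_mul (hBI_anti (by nlinarith)) (hB_anti (by nlinarith))
        (hB_nonneg _) (hBI_pos _).le
    have hI_mono : ∀ x : ℝ, (∫ y in Ioi (0:ℝ), g (x + s) y) ≤ ∫ y in Ioi (0:ℝ), g x y := by
      intro x
      exact setIntegral_mono_on (hg_int (x + s)) (hg_int x) measurableSet_Ioi
        fun y hy => hg_anti_x x y (mem_Ioi.mp hy)
    have hF_mono : ∀ x : ℝ, F (x + s) ≤ F x := by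
      intro x
      rw [hF x, hF (x + s)]
      have h1 : (BI (x + s))^2 ≤ (BI x)^2 := by
        nlinarith [hBI_pos (x + s), hBI_anti (show x ≤ x + s by linarith)]
      have h2 := hI_mono x
      nlinarith
    -- lower bound for the integral
    have hI_lower : ∀ x : ℝ, (∫ y in Ioi (0:ℝ), g x y) - δ * (BI x * B x)
        ≤ ∫ y in Ioi (0:ℝ), g (x + s) y := by
      intro x
      -- step: ∫_{Ioi 0} g x (y+δ) = ∫_{Ioi δ} g x
      have htrans : ∫ y in Ioi (0:ℝ), g x (y + δ) = ∫ y in Ioi δ, g x y := by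
        have := shift_setIntegral_Ioi (g x) δ 0
        rwa [zero_add] at this
      have hsplit : (∫ y in Ioi (0:ℝ), g x y)
          = (∫ y in Ioc (0:ℝ) δ, g x y) + ∫ y in Ioi δ, g x y := by
        rw [← setIntegral_union (Ioc_disjoint_Ioi le_rfl) measurableSet_Ioi
          ((hg_int x).mono_set Ioc_subset_Ioi_self)
          ((hg_int x).mono_set (Ioi_subset_Ioi hδ_nonneg)),
          Ioc_union_Ioi_eq_Ioi hδ_nonneg]
      have hIoc_le : (∫ y in Ioc (0:ℝ) δ, g x y) ≤ δ * (BI x * B x) := by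
        have h1 : (∫ y in Ioc (0:ℝ) δ, g x y) ≤ ∫ _ in Ioc (0:ℝ) δ, BI x * B x := by
          refine setIntegral_mono_on ((hg_int x).mono_set Ioc_subset_Ioi_self)
            (integrableOn_const measure_Ioc_lt_top.ne) measurableSet_Ioc ?_
          intro y hy
          exact mul_le_mul (hBI_anti (by nlinarith [hy.1])) (hB_anti (by nlinarith [hy.1]))
            (hB_nonneg _) (hBI_pos _).le
        have h2 : ∫ _ in Ioc (0:ℝ) δ, BI x * B x = δ * (BI x * B x) := by
          rw [setIntegral_const, Real.volume_real_Ioc_of_le hδ_nonneg]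
          rw [smul_eq_mul]
          ring_nf
        linarith
      have hshift_le : (∫ y in Ioi (0:ℝ), g x (y + δ)) ≤ ∫ y in Ioi (0:ℝ), g (x + s) y := by
        refine setIntegral_mono_on ?_ (hg_int (x + s)) measurableSet_Ioi ?_
        · have : IntegrableOn (g x) (Ioi (0 + δ)) := by
            rw [zero_add]; exact (hg_int x).mono_set (Ioi_subset_Ioi hδ_nonneg)
          exact shift_integrableOn_Ioi this
        · intro y hy
          have hyp := mem_Ioi.mp hy
          have harg : x + (y + δ) * (a - b) = x + s + y * (a - b) := by
            linear_combination hδab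
          calc g x (y + δ) = BI (x + (y + δ) * a) * B (x + (y + δ) * (a - b)) := rfl
            _ ≤ BI (x + s + y * a) * B (x + (y + δ) * (a - b)) := by
                refine mul_le_mul_of_nonneg_right (hBI_anti ?_) (hB_nonneg _)
                have hsa : s ≤ δ * a := by
                  calc s = δ * (a - b) := hδab.symm
                    _ ≤ δ * a := by nlinarith [mul_nonneg hδ_nonneg hb.le]
                nlinarith
            _ = g (x + s) y := by rw [harg]
      calc (∫ y in Ioi (0:ℝ), g x y) - δ * (BI x * B x)
          ≤ (∫ y in Ioi (0:ℝ), g x y) - ∫ y in Ioc (0:ℝ) δ, g x y := by linarith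
        _ = ∫ y in Ioi δ, g x y := by linarith [hsplit]
        _ = ∫ y in Ioi (0:ℝ), g x (y + δ) := htrans.symm
        _ ≤ ∫ y in Ioi (0:ℝ), g (x + s) y := hshift_le
    -- the lower bound function
    set L : ℝ → ℝ := fun x => (BI (x + s) / BI x)^2 - b * δ * (B x / BI x) with hL_def
    have hL_tendsto : Tendsto L atTop (nhds 1) := by
      have h1 : Tendsto (fun x => (BI (x + s) / BI x)^2) atTop (nhds 1) := by
        have := (hBI_lt s).pow 2
        simpa using this
      have h2 : Tendsto (fun x => b * δ * (B x / BI x)) atTop (nhds 0) := by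
        simpa using hq.const_mul (b * δ)
      simpa using h1.sub h2
    have hL_le : ∀ x : ℝ, L x ≤ F (x + s) / F x := by
      intro x
      have hQ : (0:ℝ) < (BI x)^2 := pow_pos (hBI_pos x) 2
      have hFx := hF_pos x
      set n : ℝ := (BI (x + s))^2 - (BI x)^2 - b * δ * (BI x * B x) with hn_def
      have hn_nonpos : n ≤ 0 := by
        have h1 : (BI (x + s))^2 ≤ (BI x)^2 := by
          nlinarith [hBI_pos (x + s), hBI_anti (show x ≤ x + s by linarith)]
        have h2 : 0 ≤ b * δ * (BI x * B x) :=
          mul_nonneg (mul_nonneg hb.le hδ_nonneg) (mul_nonneg (hBI_pos x).le (hB_nonneg x))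
        linarith
      have hFs : F x + n ≤ F (x + s) := by
        rw [hF x, hF (x + s)]
        have := hI_lower x
        have : b * ((∫ y in Ioi (0:ℝ), g x y) - δ * (BI x * B x))
            ≤ b * ∫ y in Ioi (0:ℝ), g (x + s) y :=
          mul_le_mul_of_nonneg_left (hI_lower x) hb.le
        simp only [hg_def] at this ⊢
        nlinarith
      have hQF : (BI x)^2 ≤ F x := by
        rw [hF x]
        nlinarith [hI_nonneg x]
      have hLn : L x = 1 + n / (BI x)^2 := by
        rw [hL_def, hn_def]
        have hne := (hBI_pos x).ne'
        field_simp
        ring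
      rw [hLn, le_div_iff₀ hFx]
      have hmQ : n = (n / (BI x)^2) * (BI x)^2 := (div_mul_cancel₀ n hQ.ne').symm
      have hdiv_nonpos : n / (BI x)^2 ≤ 0 := div_nonpos_iff.mpr (Or.inr ⟨hn_nonpos, hQ.le⟩)
      nlinarith [mul_le_mul_of_nonpos_left hQF hdiv_nonpos]
    have hup : ∀ x : ℝ, F (x + s) / F x ≤ 1 :=
      fun x => (div_le_one (hF_pos x)).mpr (hF_mono x)
    exact tendsto_of_tendsto_of_tendsto_of_le_of_le hL_tendsto tendsto_const_nhds hL_le hup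
  -- general t
  intro t
  rcases le_or_gt 0 t with ht | ht
  · exact key t ht
  · have h := (key (-t) (by linarith)).comp (tendsto_atTop_add_const_right atTop t tendsto_id)
    have h' : Tendsto (fun x => F x / F (x + t)) atTop (nhds 1) := by
      have heq : ((fun x => F (x + -t) / F x) ∘ fun x : ℝ => id x + t)
          = fun x => F x / F (x + t) := by
        funext x; simp
      rwa [heq] at h
    have h2 := h'.inv₀ one_ne_zero
    simp only [inv_div, inv_one] at h2
    convert h2 using 2
end

section
/- Let σ₀, σ₁, … be i.i.d. nonnegative random variables with mean b, let a < b, and define M_{0,n} by M_{0,0} = 0, M_{0,n+1} = (M_{0,n} + σ_n − a)⁺. Then M_{0,n}/n → b − a almost surely as n → ∞, and E M_{0,n} ≥ n(b−a) for every n. -/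
open MeasureTheory ProbabilityTheory Filter

private lemma max_sub_aux (x y : ℝ) : max (x - y) 0 = x - min y x := by
  rcases le_total y x with h | h
  · rw [max_eq_left (by linarith), min_eq_left h]
  · rw [max_eq_right (by linarith), min_eq_right h]; ring

/-- running minimum of a sequence -/
private def runMin (T : ℕ → ℝ) : ℕ → ℝ
  | 0 => T 0
  | n + 1 => min (T (n + 1)) (runMin T n)

/-- For i.i.d. nonnegative service times with mean `b > a`, the Lindley recursion
`M_{0,0} = 0`, `M_{0,n+1} = (M_{0,n} + σ_n − a)⁺` satisfies `M_{0,n}/n → b − a` a.s.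
and `E M_{0,n} ≥ n(b−a)` for every `n`. -/
theorem lindley_lln_and_mean_bound
    {Ω : Type*} [MeasurableSpace Ω] (μ : Measure Ω) [IsProbabilityMeasure μ]
    (σ : ℕ → Ω → ℝ) (hmeas : ∀ n, Measurable (σ n))
    (hindep : iIndepFun σ μ)
    (hident : ∀ n, IdentDistrib (σ n) (σ 0) μ μ)
    (hnonneg : ∀ n ω, 0 ≤ σ n ω)
    (hint : Integrable (σ 0) μ)
    (b : ℝ) (hmean : ∫ ω, σ 0 ω ∂μ = b)
    (a : ℝ) (hab : a < b)
    (M : ℕ → Ω → ℝ) (hM0 : ∀ ω, M 0 ω = 0)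
    (hM : ∀ n ω, M (n + 1) ω = max (M n ω + σ n ω - a) 0) :
    (∀ᵐ ω ∂μ, Tendsto (fun n : ℕ => M n ω / n) atTop (nhds (b - a))) ∧
    (∀ n : ℕ, (n : ℝ) * (b - a) ≤ ∫ ω, M n ω ∂μ) := by
  -- centered partial sums
  set T : ℕ → Ω → ℝ := fun n ω => (∑ k ∈ Finset.range n, σ k ω) - n * a with hT
  -- running minimum
  set L : ℕ → Ω → ℝ := fun n ω => runMin (fun k => T k ω) n with hL
  have hT0 : ∀ ω, T 0 ω = 0 := by intro ω; simp [hT]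
  have hTsucc : ∀ n ω, T (n + 1) ω = T n ω + σ n ω - a := by
    intro n ω
    simp only [hT, Finset.sum_range_succ, Nat.cast_succ]
    ring
  have hLsucc : ∀ n ω, L (n + 1) ω = min (T (n + 1) ω) (L n ω) := by
    intro n ω; rfl
  have hL0 : ∀ ω, L 0 ω = 0 := by
    intro ω; rw [hL]; show T 0 ω = 0; exact hT0 ω
  -- key identity : M n = T n - L n
  have key : ∀ n ω, M n ω = T n ω - L n ω := by
    intro n
    induction n with
    | zero => intro ω; rw [hM0, hL0, hT0]; ring
    | succ n ih =>
      intro ω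
      rw [hM, show M n ω + σ n ω - a = T (n + 1) ω - L n ω from by
        rw [ih, hTsucc]; ring, max_sub_aux, hLsucc, min_comm]
  -- L n ≤ 0
  have hLle : ∀ n ω, L n ω ≤ 0 := by
    intro n
    induction n with
    | zero => intro ω; rw [hL0]
    | succ n ih => intro ω; rw [hLsucc]; exact le_trans (min_le_right _ _) (ih ω)
  -- integrability facts
  have hintk : ∀ k, Integrable (σ k) μ := fun k => (hident k).integrable_iff.mpr hint
  have hTint : ∀ n, Integrable (T n) μ := by
    intro n
    exact ((integrable_finset_sum _ (fun k _ => hintk k)).sub (integrable_const _))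
  have hMint : ∀ n, Integrable (M n) μ := by
    intro n
    induction n with
    | zero =>
      have : M 0 = fun _ => (0 : ℝ) := funext hM0
      rw [this]; exact integrable_const _
    | succ n ih =>
      have : M (n + 1) = fun ω => max (M n ω + σ n ω - a) 0 := funext (hM n)
      rw [this]
      exact ((ih.add (hintk n)).sub (integrable_const a)).pos_part
  constructor
  · -- a.s. convergence
    have hslln := strong_law_ae_real σ hint
      (fun i j hij => hindep.indepFun hij) hident
    rw [hmean] at hslln
    filter_upwards [hslln] with ω hω
    -- T n / n → b - a
    have hTn : Tendsto (fun n : ℕ => T n ω / n) atTop (nhds (b - a)) := by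
      have h1 : Tendsto (fun n : ℕ => (∑ k ∈ Finset.range n, σ k ω) / n - a)
          atTop (nhds (b - a)) := hω.sub tendsto_const_nhds
      apply h1.congr'
      filter_upwards [eventually_ge_atTop 1] with n hn
      have hn' : (n : ℝ) ≠ 0 := Nat.cast_ne_zero.mpr (by omega)
      field_simp [hT]
      rfl
    -- T n → ∞
    have hTtop : Tendsto (fun n : ℕ => T n ω) atTop atTop := by
      have h2 : Tendsto (fun n : ℕ => (n : ℝ) * (T n ω / n)) atTop atTop :=
        Tendsto.atTop_mul_pos (by linarith : (0:ℝ) < b - a) tendsto_natCast_atTop_atTop hTn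
      apply h2.congr'
      filter_upwards [eventually_ge_atTop 1] with n hn
      have hn' : (n : ℝ) ≠ 0 := Nat.cast_ne_zero.mpr (by omega)
      field_simp
    -- L n eventually constant
    have hev : ∀ᶠ n in atTop, (0 : ℝ) ≤ T n ω := hTtop.eventually (eventually_ge_atTop 0)
    rw [eventually_atTop] at hev
    obtain ⟨N, hN⟩ := hev
    have hLconst : ∀ n, N ≤ n → L n ω = L N ω := by
      intro n
      induction n with
      | zero => intro hn; have h0 : N = 0 := Nat.le_zero.mp hn; rw [h0]
      | succ n ih =>
        intro hn
        rcases Nat.lt_or_ge N (n + 1) with h | h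
        · have hn' : N ≤ n := by omega
          rw [hLsucc, ih hn', min_eq_right]
          calc L N ω ≤ 0 := hLle N ω
            _ ≤ T (n + 1) ω := hN (n + 1) (by omega)
        · have h1 : N = n + 1 := by omega
          rw [h1]
    have hLn : Tendsto (fun n : ℕ => L n ω / n) atTop (nhds 0) := by
      have h3 : Tendsto (fun n : ℕ => L N ω / n) atTop (nhds 0) :=
        tendsto_const_div_atTop_nhds_zero_nat _
      apply h3.congr'
      filter_upwards [eventually_ge_atTop N] with n hn
      rw [hLconst n hn]
    have h4 : Tendsto (fun n : ℕ => T n ω / n - L n ω / n) atTop (nhds (b - a - 0)) :=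
      hTn.sub hLn
    rw [sub_zero] at h4
    apply h4.congr
    intro n
    rw [key]
    ring
  · -- expectation bound
    intro n
    have hTM : ∀ ω, T n ω ≤ M n ω := by
      intro ω
      rw [key]
      have := hLle n ω
      linarith
    have h1 : ∫ ω, T n ω ∂μ ≤ ∫ ω, M n ω ∂μ := integral_mono (hTint n) (hMint n) hTM
    have h2 : ∫ ω, T n ω ∂μ = n * b - n * a := by
      simp only [hT]
      rw [integral_sub (integrable_finset_sum _ (fun k _ => hintk k)) (integrable_const _),
        integral_finset_sum _ (fun k _ => hintk k), integral_const]
      simp only [measure_univ, ENNReal.toReal_one, smul_eq_mul, one_mul]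
      have h3 : ∀ k ∈ Finset.range n, ∫ ω, σ k ω ∂μ = b := by
        intro k _
        rw [(hident k).integral_eq, hmean]
      rw [Finset.sum_congr rfl h3, Finset.sum_const, Finset.card_range]
      simp [mul_comm]
    rw [h2] at h1
    calc (n : ℝ) * (b - a) = n * b - n * a := by ring
      _ ≤ _ := h1
end

section
/- Let B be a distribution on [0,∞) with finite mean whose tail B̄ satisfies the dominated variation condition liminf_{x→∞} B̄(2x)/B̄(x) > 0. Then the integrated tail distribution B_I with tail B̄_I(x) = ∫_x^∞ B̄(y) dy is intermediate regularly varying: lim_{c↓1} liminf_{x→∞} B̄_I(cx)/B̄_I(x) = 1. -/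
open MeasureTheory Set Filter

/-- If the tail `B̄` of a distribution on `[0,∞)` with finite mean satisfies the dominated
variation condition `liminf_{x→∞} B̄(2x)/B̄(x) > 0`, then the integrated tail
`B̄_I(x) = ∫_x^∞ B̄` is intermediate regularly varying:
`lim_{c↓1} liminf_{x→∞} B̄_I(cx)/B̄_I(x) = 1`. -/
theorem dominated_variation_implies_IRV
    (B : ℝ → ℝ) (hB_pos : ∀ x, 0 < B x) (hB_anti : Antitone B)
    (hB_le_one : ∀ x, B x ≤ 1)
    (hB_int : IntegrableOn B (Ioi 0))
    (hDV : 0 < liminf (fun x => B (2 * x) / B x) atTop)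
    (BI : ℝ → ℝ) (hBI : ∀ x, BI x = ∫ y in Ioi x, B y) :
    Tendsto (fun c => liminf (fun x => BI (c * x) / BI x) atTop)
      (nhdsWithin 1 (Ioi 1)) (nhds 1) := by
  have hB0 : ∀ x, (0:ℝ) ≤ B x := fun x => (hB_pos x).le
  have hint : ∀ x : ℝ, 0 ≤ x → IntegrableOn B (Ioi x) := fun x hx =>
    hB_int.mono_set (Ioi_subset_Ioi hx)
  obtain ⟨d, hd0, hdlt⟩ := exists_between hDV
  have hev : ∀ᶠ x in atTop, d < B (2 * x) / B x := by
    refine eventually_lt_of_lt_liminf hdlt ?_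
    exact isBoundedUnder_of ⟨0, fun x => div_nonneg (hB0 _) (hB0 _)⟩
  obtain ⟨X, hX⟩ := eventually_atTop.mp hev
  -- splitting of BI
  have hsplit : ∀ x b : ℝ, 1 ≤ x → x ≤ b → BI x = (∫ y in Ioc x b, B y) + BI b := by
    intro x b hx hxb
    rw [hBI, hBI, ← setIntegral_union (Ioc_disjoint_Ioi le_rfl) measurableSet_Ioi
        ((hint x (by linarith)).mono_set Ioc_subset_Ioi_self) (hint b (by linarith)),
      Ioc_union_Ioi_eq_Ioi hxb]
  have hconst : ∀ x b : ℝ, x ≤ b → (∫ _y in Ioc x b, B x) = (b - x) * B x := by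
    intro x b hxb
    rw [setIntegral_const, Real.volume_real_Ioc_of_le hxb, smul_eq_mul]
  have hconst' : ∀ x b : ℝ, x ≤ b → (∫ _y in Ioc x b, B b) = (b - x) * B b := by
    intro x b hxb
    rw [setIntegral_const, Real.volume_real_Ioc_of_le hxb, smul_eq_mul]
  have hcint : ∀ (cst : ℝ) (x b : ℝ), IntegrableOn (fun _ => cst) (Ioc x b) :=
    fun cst x b => integrableOn_const measure_Ioc_lt_top.ne
  have hub : ∀ x b : ℝ, 0 ≤ x → x ≤ b → (∫ y in Ioc x b, B y) ≤ (b - x) * B x := by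
    intro x b hx hxb
    rw [← hconst x b hxb]
    exact setIntegral_mono_on ((hint x hx).mono_set Ioc_subset_Ioi_self)
      (hcint (B x) x b) measurableSet_Ioc (fun y hy => hB_anti hy.1.le)
  have hlb : ∀ x b : ℝ, 0 ≤ x → x ≤ b → (b - x) * B b ≤ ∫ y in Ioc x b, B y := by
    intro x b hx hxb
    rw [← hconst' x b hxb]
    exact setIntegral_mono_on (hcint (B b) x b)
      ((hint x hx).mono_set Ioc_subset_Ioi_self) measurableSet_Ioc
      (fun y hy => hB_anti hy.2)
  have hBInn : ∀ x : ℝ, 0 ≤ BI x := by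
    intro x
    rw [hBI]
    exact setIntegral_nonneg measurableSet_Ioi (fun y _ => hB0 y)
  set M := max X 1 with hM
  -- lower bound on BI
  have hBIlow : ∀ x : ℝ, M ≤ x → d * (x * B x) ≤ BI x := by
    intro x hx
    have hx1 : (1:ℝ) ≤ x := le_trans (le_max_right _ _) hx
    have hxX : X ≤ x := le_trans (le_max_left _ _) hx
    have h2 : d * B x ≤ B (2 * x) := by
      have h := hX x hxX
      rw [lt_div_iff₀ (hB_pos x)] at h
      linarith
    have h1 : (2 * x - x) * B (2 * x) ≤ ∫ y in Ioc x (2 * x), B y :=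
      hlb x (2 * x) (by linarith) (by linarith)
    have h3 : (∫ y in Ioc x (2 * x), B y) ≤ BI x := by
      rw [hsplit x (2 * x) hx1 (by linarith)]
      linarith [hBInn (2 * x)]
    nlinarith [hB0 x]
  have hBIpos : ∀ x : ℝ, M ≤ x → 0 < BI x := by
    intro x hx
    have hx1 : (1:ℝ) ≤ x := le_trans (le_max_right _ _) hx
    exact lt_of_lt_of_le (mul_pos hd0 (mul_pos (lt_of_lt_of_le one_pos hx1) (hB_pos x)))
      (hBIlow x hx)
  -- ratio lower bound for c > 1
  have hratlow : ∀ c : ℝ, 1 < c → ∀ x : ℝ, M ≤ x →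
      1 - (c - 1) / d ≤ BI (c * x) / BI x := by
    intro c hc x hx
    have hx1 : (1:ℝ) ≤ x := le_trans (le_max_right _ _) hx
    have hP : 0 < BI x := hBIpos x hx
    have hA : BI x - (c - 1) * (x * B x) ≤ BI (c * x) := by
      have h1 : (∫ y in Ioc x (c * x), B y) ≤ (c * x - x) * B x :=
        hub x (c * x) (by linarith) (by nlinarith)
      have h2 := hsplit x (c * x) hx1 (by nlinarith)
      nlinarith
    rw [le_div_iff₀ hP]
    have hPd : d * (x * B x) ≤ BI x := hBIlow x hx
    have hd' : (c - 1) / d * d = c - 1 := div_mul_cancel₀ _ (ne_of_gt hd0)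
    have hcd : 0 ≤ (c - 1) / d := div_nonneg (by linarith) hd0.le
    nlinarith [mul_le_mul_of_nonneg_left hPd hcd]
  -- ratio upper bound
  have hratub : ∀ c : ℝ, 1 ≤ c → ∀ x : ℝ, M ≤ x → BI (c * x) / BI x ≤ 1 := by
    intro c hc x hx
    have hx1 : (1:ℝ) ≤ x := le_trans (le_max_right _ _) hx
    rw [div_le_one (hBIpos x hx)]
    rw [hBI, hBI]
    refine setIntegral_mono_set (hint x (by linarith))
      (Eventually.of_forall fun y => hB0 y) (Eventually.of_forall ?_)
    exact Ioi_subset_Ioi (by nlinarith)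
  -- liminf bounds for fixed c
  have hLub : ∀ c : ℝ, 1 ≤ c → liminf (fun x => BI (c * x) / BI x) atTop ≤ 1 := by
    intro c hc
    refine liminf_le_of_frequently_le ?_ ?_
    · exact ((eventually_ge_atTop M).mono fun x hx => hratub c hc x hx).frequently
    · exact ⟨0, (eventually_ge_atTop M).mono fun x hx =>
        div_nonneg (hBInn _) (hBIpos x hx).le⟩
  have hLlb : ∀ c : ℝ, 1 < c →
      1 - (c - 1) / d ≤ liminf (fun x => BI (c * x) / BI x) atTop := by
    intro c hc
    refine le_liminf_of_le ?_ ?_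
    · exact isCoboundedUnder_ge_of_eventually_le atTop
        ((eventually_ge_atTop M).mono fun x hx => hratub c hc.le x hx)
    · exact (eventually_ge_atTop M).mono fun x hx => hratlow c hc x hx
  -- squeeze
  have hlo : Tendsto (fun c : ℝ => 1 - (c - 1) / d) (nhdsWithin 1 (Ioi 1)) (nhds 1) := by
    have : Tendsto (fun c : ℝ => 1 - (c - 1) / d) (nhds 1) (nhds (1 - (1 - 1) / d)) := by
      exact (tendsto_const_nhds.sub ((tendsto_id.sub tendsto_const_nhds).div_const d))
    simpa using this.mono_left nhdsWithin_le_nhds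
  refine tendsto_of_tendsto_of_tendsto_of_le_of_le' hlo tendsto_const_nhds ?_ ?_
  · exact eventually_mem_nhdsWithin.mono fun c hc => hLlb c hc
  · exact eventually_mem_nhdsWithin.mono fun c hc => hLub c hc.le
end
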